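/- arXiv:1904.11143 — 8 statements merged into one kernel-verified Lean document; each statement's English description precedes it below -/
import Mathlib

section
/- Suppose two models of a misclassified endogenous binary regressor are given, each consisting of: a probability space (Ω, F, P); an integrable real random variable Y; random variables T, T*, Z, V taking values in {0,1}; functions α, β : {0,1} → ℝ; and ε := Y − α(V) − β(V)·T*. Suppose each model satisfies: every event {T = t, T* = t*, Z = z, V = v} (t, t*, z, v ∈ {0,1}) has positive probability; E[ε | Z = z, V = v] = 0 for all z, v; Assumption 1: (a) E[ε | T* = t*, T = t, Z = z, V = v] = E[ε | T* = t*, Z = z, V = v] for all t, t*, z, v; (b) E[ε | T* = t*, Z = z, V = v] = E[ε | T* = t*, V = v] for all t*, z, v; (c) P(T* = 1 | Z = 0, V = v) ≠ P(T* = 1 | Z = 1, V = v) for each v; (d) P(T = 1 | T* = t*, Z = z, V = 0) = P(T = 1 | T* = t*, Z = z, V = 1) for all t*, z (denote the common value P(T = 1 | T* = t*, Z = z)); (e) P(T* = 1 | Z = z, V = 0) ≠ P(T* = 1 | Z = z, V = 1) for each z; (f) 0 < P(T = 1 | T* = 0, Z = z) < P(T = 1 | T* = 1, Z = z) < 1 for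 each z; (g) β(v) ≠ E[ε | T* = 0, V = v] − E[ε | T* = 1, V = v] for each v; (h) 0 < P(T* = 1 | Z = z, V = v) < 1 for all z, v; and Assumption 2: writing p(z, v) := P(T* = 1 | Z = z, V = v), ((1 − p(0,0))(1 − p(1,1)))/((1 − p(1,0))(1 − p(0,1))) ≠ (p(0,0)·p(1,1))/(p(1,0)·p(0,1)). If the two models induce the same joint distribution of the observables, i.e., the pushforward measures of (Y, T, Z, V) on ℝ × {0,1}³ coincide, then the two models have the same α(v) and β(v) for each v ∈ {0,1}, the same misclassification probabilities P(T = 1 | T* = t*, Z = z) for all t*, z, and the same P(T* = 1 | Z = z, V = v) for all z, v. -/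
/-!
Conditioning on `T*` turns exogeneity and the relevance condition 1(c) into
`E[ε | T*, V] = 0`, so each model expresses the observable moments `P(T = 1 | Z, V)`,
`E[Y | Z, V]` and `E[Y·T | Z, V]` through its parameters `α, β`, the misclassification rates
`fpr z = P(T = 1 | T* = 0, Z = z)`, `tpr z = P(T = 1 | T* = 1, Z = z)` and `p`.
In every cell `(z, v)` these moments satisfy
`E[Y·T | Z, V] = x z · E[Y | Z, V] + c v · (P(T = 1 | Z, V) - x z)` both for `(x, c) = (tpr, α)`
and for `(x, c) = (fpr, α + β)`, and Assumption 2 rules out every other solution `(x, c)`.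
The second model therefore has the same pairs, in the same order since `fpr < tpr` in both
models, and `β ≠ 0` (from 1(g)) recovers `p` from `E[Y | Z, V]`.
-/

open MeasureTheory

/-- Conditional expectation of `X` given the event `A`: `E[X | A] = E[X · 1_A] / P(A)`. -/
noncomputable def cExp {Ω : Type*} [MeasurableSpace Ω] (P : Measure Ω)
    (X : Ω → ℝ) (A : Set Ω) : ℝ :=
  (∫ ω in A, X ω ∂P) / (P A).toReal

/-- Conditional probability of the event `B` given the event `A`: `P(B | A) = P(A ∩ B) / P(A)`. -/
noncomputable def cPr {Ω : Type*} [MeasurableSpace Ω] (P : Measure Ω)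
    (B A : Set Ω) : ℝ :=
  (P (A ∩ B)).toReal / (P A).toReal

/-- Coercion of a `{0,1}`-valued (Boolean) random variable to a real number. -/
def b2r (b : Bool) : ℝ := if b then 1 else 0

/-- The structural error term `ε = Y − α(V) − β(V)·T*` of the outcome equation. -/
noncomputable def modelEps {Ω : Type*} (Y : Ω → ℝ) (Tstar V : Ω → Bool)
    (α β : Bool → ℝ) : Ω → ℝ :=
  fun ω => Y ω - α (V ω) - β (V ω) * b2r (Tstar ω)

/-- `P(T* = 1 | Z = z, V = v)`. -/
noncomputable def pStar {Ω : Type*} [MeasurableSpace Ω] (P : Measure Ω)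
    (Tstar Z V : Ω → Bool) (z v : Bool) : ℝ :=
  cPr P {ω | Tstar ω = true} {ω | Z ω = z ∧ V ω = v}

/-- A model of a misclassified endogenous binary regressor satisfying
the exogeneity condition `E[ε | Z, V] = 0` together with Assumptions 1 and 2
of the paper (all cells have positive probability; `1` is encoded as `true`
and `0` as `false`). -/
structure ModelAssumptions {Ω : Type*} [MeasurableSpace Ω] (P : Measure Ω)
    (Y : Ω → ℝ) (T Tstar Z V : Ω → Bool) (α β : Bool → ℝ) : Prop where
  prob : IsProbabilityMeasure P
  measY : Measurable Y
  measT : Measurable T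
  measTstar : Measurable Tstar
  measZ : Measurable Z
  measV : Measurable V
  intY : Integrable Y P
  /-- every event `{T = t, T* = t*, Z = z, V = v}` has positive probability -/
  cellPos : ∀ t t' z v : Bool,
    0 < P {ω | T ω = t ∧ Tstar ω = t' ∧ Z ω = z ∧ V ω = v}
  /-- `E[ε | Z = z, V = v] = 0` -/
  exog : ∀ z v : Bool,
    cExp P (modelEps Y Tstar V α β) {ω | Z ω = z ∧ V ω = v} = 0
  /-- Assumption 1(a) -/
  a1a : ∀ t t' z v : Bool,
    cExp P (modelEps Y Tstar V α β)
        {ω | T ω = t ∧ Tstar ω = t' ∧ Z ω = z ∧ V ω = v}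
      = cExp P (modelEps Y Tstar V α β) {ω | Tstar ω = t' ∧ Z ω = z ∧ V ω = v}
  /-- Assumption 1(b) -/
  a1b : ∀ t' z v : Bool,
    cExp P (modelEps Y Tstar V α β) {ω | Tstar ω = t' ∧ Z ω = z ∧ V ω = v}
      = cExp P (modelEps Y Tstar V α β) {ω | Tstar ω = t' ∧ V ω = v}
  /-- Assumption 1(c) -/
  a1c : ∀ v : Bool, pStar P Tstar Z V false v ≠ pStar P Tstar Z V true v
  /-- Assumption 1(d): `P(T = 1 | T* = t*, Z = z, V = v)` does not depend on `v`;
  the common value is `P(T = 1 | T* = t*, Z = z)`. -/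
  a1d : ∀ t' z v : Bool,
    cPr P {ω | T ω = true} {ω | Tstar ω = t' ∧ Z ω = z ∧ V ω = v}
      = cPr P {ω | T ω = true} {ω | Tstar ω = t' ∧ Z ω = z}
  /-- Assumption 1(e) -/
  a1e : ∀ z : Bool, pStar P Tstar Z V z false ≠ pStar P Tstar Z V z true
  /-- Assumption 1(f) -/
  a1f : ∀ z : Bool,
    0 < cPr P {ω | T ω = true} {ω | Tstar ω = false ∧ Z ω = z}
    ∧ cPr P {ω | T ω = true} {ω | Tstar ω = false ∧ Z ω = z}
        < cPr P {ω | T ω = true} {ω | Tstar ω = true ∧ Z ω = z}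
    ∧ cPr P {ω | T ω = true} {ω | Tstar ω = true ∧ Z ω = z} < 1
  /-- Assumption 1(g) -/
  a1g : ∀ v : Bool,
    β v ≠ cExp P (modelEps Y Tstar V α β) {ω | Tstar ω = false ∧ V ω = v}
          - cExp P (modelEps Y Tstar V α β) {ω | Tstar ω = true ∧ V ω = v}
  /-- Assumption 1(h) -/
  a1h : ∀ z v : Bool,
    0 < pStar P Tstar Z V z v ∧ pStar P Tstar Z V z v < 1
  /-- Assumption 2 -/
  a2 : ((1 - pStar P Tstar Z V false false) * (1 - pStar P Tstar Z V true true))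
        / ((1 - pStar P Tstar Z V true false) * (1 - pStar P Tstar Z V false true))
      ≠ (pStar P Tstar Z V false false * pStar P Tstar Z V true true)
        / (pStar P Tstar Z V true false * pStar P Tstar Z V false true)

theorem Set.setOf_inter_preimage_true {Ω : Type*} (g : Ω → Bool) (R : Ω → Prop) :
    {ω | R ω} ∩ g ⁻¹' {true} = {ω | g ω = true ∧ R ω} := by
  ext ω; simp [and_comm]

theorem Set.setOf_sdiff_preimage_true {Ω : Type*} (g : Ω → Bool) (R : Ω → Prop) :
    {ω | R ω} \ g ⁻¹' {true} = {ω | g ω = false ∧ R ω} := by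
  ext ω; simp [and_comm]

theorem eq_zero_of_mix_eq_zero {K : Type*} [CommRing K] [NoZeroDivisors K] {a b p q : K}
    (hp : a * (1 - p) + b * p = 0) (hq : a * (1 - q) + b * q = 0) (hpq : p ≠ q) :
    a = 0 ∧ b = 0 := by
  have hba : b = a := by
    have : (b - a) * (p - q) = 0 := by linear_combination hp - hq
    exact sub_eq_zero.1 ((mul_eq_zero.1 this).resolve_right (sub_ne_zero.2 hpq))
  subst hba
  exact ⟨by linear_combination hp, by linear_combination hp⟩

section

variable {Ω : Type*} [MeasurableSpace Ω] {P : Measure Ω}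

theorem cExp_mul_measureReal {X : Ω → ℝ} {A : Set Ω} (hA : P.real A ≠ 0) :
    cExp P X A * P.real A = ∫ ω in A, X ω ∂P :=
  div_mul_cancel₀ _ hA

theorem cPr_mul_measureReal {A B : Set Ω} (hA : P.real A ≠ 0) :
    cPr P B A * P.real A = P.real (A ∩ B) :=
  div_mul_cancel₀ _ hA

theorem setIntegral_eq_add_of_bool {g : Ω → Bool} (hg : Measurable g) (R : Ω → Prop)
    {f : Ω → ℝ} (hf : IntegrableOn f {ω | R ω} P) :
    ∫ ω in {ω | R ω}, f ω ∂P
      = ∫ ω in {ω | g ω = true ∧ R ω}, f ω ∂P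
        + ∫ ω in {ω | g ω = false ∧ R ω}, f ω ∂P := by
  rw [← integral_inter_add_sdiff (hg (measurableSet_singleton true)) hf,
    Set.setOf_inter_preimage_true, Set.setOf_sdiff_preimage_true]

theorem measureReal_eq_add_of_bool [IsFiniteMeasure P] {g : Ω → Bool} (hg : Measurable g)
    (R : Ω → Prop) :
    P.real {ω | R ω}
      = P.real {ω | g ω = true ∧ R ω} + P.real {ω | g ω = false ∧ R ω} := by
  rw [← measureReal_inter_add_sdiff (hg (measurableSet_singleton true)),
    Set.setOf_inter_preimage_true, Set.setOf_sdiff_preimage_true]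

theorem measureReal_preimage_eq_of_map_eq {Ω₁ Ω₂ E : Type*} [MeasurableSpace Ω₁]
    [MeasurableSpace Ω₂] [MeasurableSpace E] {P₁ : Measure Ω₁} {P₂ : Measure Ω₂}
    {W₁ : Ω₁ → E} {W₂ : Ω₂ → E} (hW₁ : Measurable W₁) (hW₂ : Measurable W₂)
    (hmap : P₁.map W₁ = P₂.map W₂) {S : Set E} (hS : MeasurableSet S) :
    P₁.real (W₁ ⁻¹' S) = P₂.real (W₂ ⁻¹' S) := by
  rw [← map_measureReal_apply hW₁ hS, hmap, map_measureReal_apply hW₂ hS]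

theorem setIntegral_preimage_eq_of_map_eq {Ω₁ Ω₂ E : Type*} [MeasurableSpace Ω₁]
    [MeasurableSpace Ω₂] [MeasurableSpace E] {P₁ : Measure Ω₁} {P₂ : Measure Ω₂}
    {W₁ : Ω₁ → E} {W₂ : Ω₂ → E} (hW₁ : Measurable W₁) (hW₂ : Measurable W₂)
    (hmap : P₁.map W₁ = P₂.map W₂) {S : Set E} (hS : MeasurableSet S)
    {f : E → ℝ} (hf : Measurable f) :
    ∫ ω in W₁ ⁻¹' S, f (W₁ ω) ∂P₁
      = ∫ ω in W₂ ⁻¹' S, f (W₂ ω) ∂P₂ := by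
  rw [← setIntegral_map hS hf.aestronglyMeasurable hW₁.aemeasurable, hmap,
    setIntegral_map hS hf.aestronglyMeasurable hW₂.aemeasurable]

end

@[ext]
structure MisclassParams (K : Type*) where
  α : Bool → K
  β : Bool → K
  fpr : Bool → K
  tpr : Bool → K
  p : Bool → Bool → K

namespace MisclassParams

variable {K : Type*}

section Field

variable [Field K] (θ : MisclassParams K)

-- The moments `P(T = 1 | Z, V)`, `E[Y | Z, V]` and `E[Y·T | Z, V]` implied by the parameters.
def probT (z v : Bool) : K := θ.fpr z + (θ.tpr z - θ.fpr z) * θ.p z v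

def meanY (z v : Bool) : K := θ.α v + θ.β v * θ.p z v

def meanYT (z v : Bool) : K := θ.α v * θ.probT z v + θ.β v * θ.tpr z * θ.p z v

def IsMomentSolution (x c : Bool → K) : Prop :=
  ∀ z v, θ.meanYT z v = x z * θ.meanY z v + c v * (θ.probT z v - x z)

theorem isMomentSolution_tpr : θ.IsMomentSolution θ.tpr θ.α := fun z v => by
  simp only [meanYT, meanY, probT]; ring

theorem isMomentSolution_fpr : θ.IsMomentSolution θ.fpr (θ.α + θ.β) := fun z v => by
  simp only [meanYT, meanY, probT, Pi.add_apply]; ring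

variable {θ}

theorem IsMomentSolution.eq_tpr_or_eq_fpr {x c : Bool → K} (h : θ.IsMomentSolution x c)
    (hβ : ∀ v, θ.β v ≠ 0) (hne : ∀ z, θ.fpr z ≠ θ.tpr z)
    (hp0 : ∀ z v, θ.p z v ≠ 0) (hp1 : ∀ z v, θ.p z v ≠ 1)
    (h2 : ((1 - θ.p false false) * (1 - θ.p true true))
        / ((1 - θ.p true false) * (1 - θ.p false true))
      ≠ (θ.p false false * θ.p true true) / (θ.p true false * θ.p false true)) :
    (x = θ.tpr ∧ c = θ.α) ∨ (x = θ.fpr ∧ c = θ.α + θ.β) := by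
  have hp1' : ∀ z v, 1 - θ.p z v ≠ 0 := fun z v => sub_ne_zero.2 (hp1 z v).symm
  have hcell : ∀ z v, (c v - θ.α v) * (1 - θ.p z v) * (θ.fpr z - x z)
      = (θ.β v - (c v - θ.α v)) * θ.p z v * (θ.tpr z - x z) := fun z v => by
    have := h z v
    simp only [meanYT, meanY, probT] at this
    linear_combination -this
  -- the products of the cell equations (0,0),(1,1) and (0,1),(1,0) differ by Assumption 2
  have hD : (c false - θ.α false) * (c true - θ.α true) * (θ.fpr false - x false)
      * (θ.fpr true - x true) = 0 := by
    rw [Ne, div_eq_div_iff (mul_ne_zero (hp1' _ _) (hp1' _ _))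
      (mul_ne_zero (hp0 _ _) (hp0 _ _))] at h2
    refine (mul_eq_zero.1 ?_).resolve_right (sub_ne_zero.2 h2)
    linear_combination θ.p true false * θ.p false true
        * congrArg₂ (· * ·) (hcell false false) (hcell true true)
      - θ.p false false * θ.p true true
        * congrArg₂ (· * ·) (hcell false true) (hcell true false)
  have of_c_eq : ∀ v, c v = θ.α v → x = θ.tpr ∧ c = θ.α := fun v hv => by
    have hx : x = θ.tpr := funext fun z => by
      have := hcell z v
      rw [hv, sub_self, zero_mul, zero_mul, sub_zero] at this
      exact (sub_eq_zero.1 ((mul_eq_zero.1 this.symm).resolve_left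
        (mul_ne_zero (hβ v) (hp0 z v)))).symm
    refine ⟨hx, funext fun v' => ?_⟩
    have := hcell false v'
    rw [hx, sub_self, mul_zero] at this
    exact sub_eq_zero.1 ((mul_eq_zero.1 ((mul_eq_zero.1 this).resolve_right
      (sub_ne_zero.2 (hne false)))).resolve_right (hp1' _ _))
  have of_x_eq : ∀ z, θ.fpr z = x z → x = θ.fpr ∧ c = θ.α + θ.β := fun z hz => by
    have hc : c = θ.α + θ.β := funext fun v => by
      have := hcell z v
      rw [hz, sub_self, mul_zero] at this
      have := (mul_eq_zero.1 ((mul_eq_zero.1 this.symm).resolve_right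
        (sub_ne_zero.2 (hz ▸ hne z).symm))).resolve_right (hp0 z v)
      simp only [Pi.add_apply]
      linear_combination -this
    refine ⟨funext fun z' => ?_, hc⟩
    have := hcell z' false
    simp only [hc, Pi.add_apply, add_sub_cancel_left, sub_self, zero_mul] at this
    exact (sub_eq_zero.1 ((mul_eq_zero.1 this).resolve_left
      (mul_ne_zero (hβ false) (hp1' _ _)))).symm
  simp only [mul_eq_zero, sub_eq_zero] at hD
  rcases hD with ((hv | hv) | hz) | hz
  exacts [.inl (of_c_eq _ hv), .inl (of_c_eq _ hv), .inr (of_x_eq _ hz), .inr (of_x_eq _ hz)]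

end Field

theorem eq_of_moments_eq [Field K] [LinearOrder K] [IsStrictOrderedRing K]
    {θ θ' : MisclassParams K} (hβ : ∀ v, θ.β v ≠ 0) (hlt : ∀ z, θ.fpr z < θ.tpr z)
    (hp : ∀ z v, 0 < θ.p z v ∧ θ.p z v < 1)
    (h2 : ((1 - θ.p false false) * (1 - θ.p true true))
        / ((1 - θ.p true false) * (1 - θ.p false true))
      ≠ (θ.p false false * θ.p true true) / (θ.p true false * θ.p false true))
    (hlt' : ∀ z, θ'.fpr z < θ'.tpr z)
    (hq : θ.probT = θ'.probT) (hr : θ.meanY = θ'.meanY) (hs : θ.meanYT = θ'.meanYT) :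
    θ = θ' := by
  have solutions : ∀ {x c}, θ'.IsMomentSolution x c →
      (x = θ.tpr ∧ c = θ.α) ∨ (x = θ.fpr ∧ c = θ.α + θ.β) := fun hsol =>
    (show θ.IsMomentSolution _ _ by rwa [IsMomentSolution, hq, hr, hs]).eq_tpr_or_eq_fpr hβ
      (fun z => (hlt z).ne) (fun z v => (hp z v).1.ne') (fun z v => (hp z v).2.ne) h2
  obtain ⟨htpr, hα⟩ : θ'.tpr = θ.tpr ∧ θ'.α = θ.α := by
    rcases solutions θ'.isMomentSolution_tpr with h | ⟨htpr, -⟩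
    · exact h
    rcases solutions θ'.isMomentSolution_fpr with ⟨hfpr, -⟩ | ⟨hfpr, -⟩
    · exact absurd (hlt' false) (by rw [htpr, hfpr]; exact lt_asymm (hlt false))
    · exact absurd (hlt' false) (by rw [htpr, hfpr]; exact lt_irrefl _)
  obtain ⟨hfpr, hαβ⟩ : θ'.fpr = θ.fpr ∧ θ'.α + θ'.β = θ.α + θ.β := by
    rcases solutions θ'.isMomentSolution_fpr with ⟨hfpr, -⟩ | h
    · exact absurd (hlt' false) (by rw [htpr, hfpr]; exact lt_irrefl _)
    · exact h
  have hβ' : θ'.β = θ.β := by rw [hα] at hαβ; exact add_left_cancel hαβ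
  have hp' : θ'.p = θ.p := funext₂ fun z v => by
    have := congrFun₂ hr z v
    simp only [meanY, hα, hβ'] at this
    exact (mul_left_cancel₀ (hβ v) (add_left_cancel this)).symm
  exact (MisclassParams.ext hα hβ' hfpr htpr hp').symm

end MisclassParams

noncomputable def misclassParams {Ω : Type*} [MeasurableSpace Ω] (P : Measure Ω)
    (T Ts Z V : Ω → Bool) (α β : Bool → ℝ) : MisclassParams ℝ where
  α := α
  β := β
  fpr z := cPr P {ω | T ω = true} {ω | Ts ω = false ∧ Z ω = z}
  tpr z := cPr P {ω | T ω = true} {ω | Ts ω = true ∧ Z ω = z}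
  p := pStar P Ts Z V

section

variable {Ω : Type*} [MeasurableSpace Ω] {P : Measure Ω}

namespace ModelAssumptions

variable {Y : Ω → ℝ} {T Ts Z V : Ω → Bool} {α β : Bool → ℝ}

theorem measureReal_ne_zero_of_cell_subset (h : ModelAssumptions P Y T Ts Z V α β) {A : Set Ω}
    {t t' z v : Bool} (hA : {ω | T ω = t ∧ Ts ω = t' ∧ Z ω = z ∧ V ω = v} ⊆ A) :
    P.real A ≠ 0 :=
  have := h.prob
  (ENNReal.toReal_pos ((h.cellPos t t' z v).trans_le (measure_mono hA)).ne'
    (measure_ne_top P A)).ne'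

theorem measureReal_zv_ne_zero (h : ModelAssumptions P Y T Ts Z V α β) (z v : Bool) :
    P.real {ω | Z ω = z ∧ V ω = v} ≠ 0 :=
  h.measureReal_ne_zero_of_cell_subset (t := true) (t' := true) fun _ hω => hω.2.2

theorem measureReal_tstar_zv_ne_zero (h : ModelAssumptions P Y T Ts Z V α β) (t' z v : Bool) :
    P.real {ω | Ts ω = t' ∧ Z ω = z ∧ V ω = v} ≠ 0 :=
  h.measureReal_ne_zero_of_cell_subset (t := true) fun _ hω => hω.2

theorem integrable_eps (h : ModelAssumptions P Y T Ts Z V α β) :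
    Integrable (modelEps Y Ts V α β) P :=
  have := h.prob
  (h.intY.sub (Integrable.of_finite.comp_measurable h.measV)).sub
    ((Integrable.of_finite (f := fun x : Bool × Bool => β x.1 * b2r x.2)).comp_measurable
      (h.measV.prodMk h.measTstar))

theorem measureReal_tstar_true (h : ModelAssumptions P Y T Ts Z V α β) (z v : Bool) :
    P.real {ω | Ts ω = true ∧ Z ω = z ∧ V ω = v}
      = pStar P Ts Z V z v * P.real {ω | Z ω = z ∧ V ω = v} := by
  rw [pStar, cPr_mul_measureReal (h.measureReal_zv_ne_zero z v)]
  congr 1; ext ω; simp [and_comm]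

theorem measureReal_tstar_false (h : ModelAssumptions P Y T Ts Z V α β) (z v : Bool) :
    P.real {ω | Ts ω = false ∧ Z ω = z ∧ V ω = v}
      = (1 - pStar P Ts Z V z v) * P.real {ω | Z ω = z ∧ V ω = v} := by
  have := h.prob
  have := measureReal_eq_add_of_bool (P := P) h.measTstar fun ω => Z ω = z ∧ V ω = v
  rw [h.measureReal_tstar_true] at this
  linear_combination -this

theorem measureReal_tstar_T (h : ModelAssumptions P Y T Ts Z V α β) (t' z v : Bool) :
    P.real {ω | Ts ω = t' ∧ T ω = true ∧ Z ω = z ∧ V ω = v}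
      = cPr P {ω | T ω = true} {ω | Ts ω = t' ∧ Z ω = z}
        * P.real {ω | Ts ω = t' ∧ Z ω = z ∧ V ω = v} := by
  rw [← h.a1d t' z v, cPr_mul_measureReal (h.measureReal_tstar_zv_ne_zero _ z v)]
  congr 1; ext ω; simp only [Set.mem_ofPred_eq, Set.mem_inter_iff]; tauto

theorem integral_eps_zv_eq_zero (h : ModelAssumptions P Y T Ts Z V α β) (z v : Bool) :
    ∫ ω in {ω | Z ω = z ∧ V ω = v}, modelEps Y Ts V α β ω ∂P = 0 := by
  rw [← cExp_mul_measureReal (h.measureReal_zv_ne_zero z v),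
    h.exog, zero_mul]

theorem cExp_eps_tstar_eq_zero (h : ModelAssumptions P Y T Ts Z V α β) (t' v : Bool) :
    cExp P (modelEps Y Ts V α β) {ω | Ts ω = t' ∧ V ω = v} = 0 := by
  have mix : ∀ z, cExp P (modelEps Y Ts V α β) {ω | Ts ω = false ∧ V ω = v}
      * (1 - pStar P Ts Z V z v)
      + cExp P (modelEps Y Ts V α β) {ω | Ts ω = true ∧ V ω = v} * pStar P Ts Z V z v
      = 0 := by
    intro z
    have hsplit := h.integral_eps_zv_eq_zero z v
    rw [setIntegral_eq_add_of_bool h.measTstar _ h.integrable_eps.integrableOn,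
      ← cExp_mul_measureReal (h.measureReal_tstar_zv_ne_zero _ z v),
      ← cExp_mul_measureReal (h.measureReal_tstar_zv_ne_zero _ z v),
      h.a1b, h.a1b, h.measureReal_tstar_true, h.measureReal_tstar_false] at hsplit
    refine (mul_eq_zero.1 ?_).resolve_right (h.measureReal_zv_ne_zero z v)
    linear_combination hsplit
  obtain ⟨h0, h1⟩ := eq_zero_of_mix_eq_zero (mix false) (mix true) (h.a1c v)
  cases t' <;> assumption

theorem beta_ne_zero (h : ModelAssumptions P Y T Ts Z V α β) (v : Bool) : β v ≠ 0 := by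
  simpa [h.cExp_eps_tstar_eq_zero] using h.a1g v

theorem integral_eps_T_eq_zero (h : ModelAssumptions P Y T Ts Z V α β) (z v : Bool) :
    ∫ ω in {ω | T ω = true ∧ Z ω = z ∧ V ω = v}, modelEps Y Ts V α β ω ∂P = 0 := by
  have cell : ∀ t', ∫ ω in {ω | Ts ω = t' ∧ T ω = true ∧ Z ω = z ∧ V ω = v},
      modelEps Y Ts V α β ω ∂P = 0 := fun t' => by
    rw [show {ω | Ts ω = t' ∧ T ω = true ∧ Z ω = z ∧ V ω = v}
        = {ω | T ω = true ∧ Ts ω = t' ∧ Z ω = z ∧ V ω = v} from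
          Set.ext fun _ => and_left_comm,
      ← cExp_mul_measureReal (h.measureReal_ne_zero_of_cell_subset subset_rfl), h.a1a, h.a1b,
      h.cExp_eps_tstar_eq_zero, zero_mul]
  rw [setIntegral_eq_add_of_bool h.measTstar _ h.integrable_eps.integrableOn, cell, cell,
    add_zero]

theorem setIntegral_Y_of_tstar (h : ModelAssumptions P Y T Ts Z V α β) {S : Set Ω}
    (hS : MeasurableSet S) {t' v : Bool} (hSv : ∀ ω ∈ S, Ts ω = t' ∧ V ω = v) :
    ∫ ω in S, Y ω ∂P
      = ∫ ω in S, modelEps Y Ts V α β ω ∂P + (α v + β v * b2r t') * P.real S := by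
  have := h.prob
  have hY : ∀ ω ∈ S, Y ω = modelEps Y Ts V α β ω + (α v + β v * b2r t') :=
    fun ω hω => by
    simp only [modelEps, (hSv ω hω).1, (hSv ω hω).2]; ring
  rw [setIntegral_congr_fun hS hY, integral_add h.integrable_eps.integrableOn
    (integrableOn_const (measure_ne_top P S)), setIntegral_const, smul_eq_mul, mul_comm]

theorem setIntegral_Y (h : ModelAssumptions P Y T Ts Z V α β) {R : Ω → Prop}
    (hR : MeasurableSet {ω | R ω}) {v : Bool} (hRv : ∀ ω, R ω → V ω = v) :
    ∫ ω in {ω | R ω}, Y ω ∂P = ∫ ω in {ω | R ω}, modelEps Y Ts V α β ω ∂P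
      + α v * P.real {ω | R ω} + β v * P.real {ω | Ts ω = true ∧ R ω} := by
  have := h.prob
  have hpiece : ∀ t', MeasurableSet {ω | Ts ω = t' ∧ R ω} := fun t' =>
    (measurableSet_eq_fun h.measTstar measurable_const).inter hR
  rw [setIntegral_eq_add_of_bool h.measTstar R h.intY.integrableOn,
    setIntegral_eq_add_of_bool h.measTstar R h.integrable_eps.integrableOn,
    measureReal_eq_add_of_bool h.measTstar R,
    h.setIntegral_Y_of_tstar (hpiece true) fun ω hω => ⟨hω.1, hRv ω hω.2⟩,
    h.setIntegral_Y_of_tstar (hpiece false) fun ω hω => ⟨hω.1, hRv ω hω.2⟩]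
  simp only [b2r, ↓reduceIte, Bool.false_eq_true, mul_one, mul_zero, add_zero]
  ring

theorem measureReal_T_eq_probT (h : ModelAssumptions P Y T Ts Z V α β) (z v : Bool) :
    P.real {ω | T ω = true ∧ Z ω = z ∧ V ω = v}
      = (misclassParams P T Ts Z V α β).probT z v * P.real {ω | Z ω = z ∧ V ω = v} := by
  have := h.prob
  rw [measureReal_eq_add_of_bool h.measTstar, h.measureReal_tstar_T, h.measureReal_tstar_T,
    h.measureReal_tstar_true, h.measureReal_tstar_false]
  simp only [MisclassParams.probT, misclassParams]
  ring

theorem integral_Y_zv_eq_meanY (h : ModelAssumptions P Y T Ts Z V α β) (z v : Bool) :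
    ∫ ω in {ω | Z ω = z ∧ V ω = v}, Y ω ∂P
      = (misclassParams P T Ts Z V α β).meanY z v * P.real {ω | Z ω = z ∧ V ω = v} := by
  rw [h.setIntegral_Y (R := fun ω => Z ω = z ∧ V ω = v)
      ((measurableSet_eq_fun h.measZ measurable_const).inter
        (measurableSet_eq_fun h.measV measurable_const)) fun _ hω => hω.2,
    h.integral_eps_zv_eq_zero, h.measureReal_tstar_true]
  simp only [MisclassParams.meanY, misclassParams]
  ring

theorem integral_Y_T_eq_meanYT (h : ModelAssumptions P Y T Ts Z V α β) (z v : Bool) :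
    ∫ ω in {ω | T ω = true ∧ Z ω = z ∧ V ω = v}, Y ω ∂P
      = (misclassParams P T Ts Z V α β).meanYT z v * P.real {ω | Z ω = z ∧ V ω = v} := by
  rw [h.setIntegral_Y (R := fun ω => T ω = true ∧ Z ω = z ∧ V ω = v)
      ((measurableSet_eq_fun h.measT measurable_const).inter
      ((measurableSet_eq_fun h.measZ measurable_const).inter
        (measurableSet_eq_fun h.measV measurable_const))) fun _ hω => hω.2.2,
    h.integral_eps_T_eq_zero, h.measureReal_T_eq_probT, h.measureReal_tstar_T,
    h.measureReal_tstar_true]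
  simp only [MisclassParams.meanYT, misclassParams]
  ring

end ModelAssumptions

end

theorem ModelAssumptions.moments_eq_of_map_eq {Ω₁ Ω₂ : Type*} [MeasurableSpace Ω₁]
    [MeasurableSpace Ω₂] {P₁ : Measure Ω₁} {P₂ : Measure Ω₂}
    {Y₁ : Ω₁ → ℝ} {T₁ Ts₁ Z₁ V₁ : Ω₁ → Bool} {α₁ β₁ : Bool → ℝ}
    {Y₂ : Ω₂ → ℝ} {T₂ Ts₂ Z₂ V₂ : Ω₂ → Bool} {α₂ β₂ : Bool → ℝ}
    (h₁ : ModelAssumptions P₁ Y₁ T₁ Ts₁ Z₁ V₁ α₁ β₁)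
    (h₂ : ModelAssumptions P₂ Y₂ T₂ Ts₂ Z₂ V₂ α₂ β₂)
    (hobs : Measure.map (fun ω => (Y₁ ω, T₁ ω, Z₁ ω, V₁ ω)) P₁
          = Measure.map (fun ω => (Y₂ ω, T₂ ω, Z₂ ω, V₂ ω)) P₂) :
    let θ₁ := misclassParams P₁ T₁ Ts₁ Z₁ V₁ α₁ β₁
    let θ₂ := misclassParams P₂ T₂ Ts₂ Z₂ V₂ α₂ β₂
    θ₁.probT = θ₂.probT ∧ θ₁.meanY = θ₂.meanY ∧ θ₁.meanYT = θ₂.meanYT := by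
  have hW₁ := h₁.measY.prodMk (h₁.measT.prodMk (h₁.measZ.prodMk h₁.measV))
  have hW₂ := h₂.measY.prodMk (h₂.measT.prodMk (h₂.measZ.prodMk h₂.measV))
  have hZV : ∀ z v : Bool,
      MeasurableSet {x : ℝ × Bool × Bool × Bool | x.2.2.1 = z ∧ x.2.2.2 = v} :=
    fun z v => measurableSet_setOfPred.2 (by fun_prop)
  have hTZV : ∀ z v : Bool,
      MeasurableSet
        {x : ℝ × Bool × Bool × Bool | x.2.1 = true ∧ x.2.2.1 = z ∧ x.2.2.2 = v} :=
    fun z v => measurableSet_setOfPred.2 (by fun_prop)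
  have hπ : ∀ z v,
      P₁.real {ω | Z₁ ω = z ∧ V₁ ω = v} = P₂.real {ω | Z₂ ω = z ∧ V₂ ω = v} :=
    fun z v => measureReal_preimage_eq_of_map_eq hW₁ hW₂ hobs (hZV z v)
  have hT : ∀ z v, P₁.real {ω | T₁ ω = true ∧ Z₁ ω = z ∧ V₁ ω = v}
      = P₂.real {ω | T₂ ω = true ∧ Z₂ ω = z ∧ V₂ ω = v} :=
    fun z v => measureReal_preimage_eq_of_map_eq hW₁ hW₂ hobs (hTZV z v)
  have hY : ∀ z v, ∫ ω in {ω | Z₁ ω = z ∧ V₁ ω = v}, Y₁ ω ∂P₁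
      = ∫ ω in {ω | Z₂ ω = z ∧ V₂ ω = v}, Y₂ ω ∂P₂ :=
    fun z v => setIntegral_preimage_eq_of_map_eq hW₁ hW₂ hobs (hZV z v) measurable_fst
  have hYT : ∀ z v,
      ∫ ω in {ω | T₁ ω = true ∧ Z₁ ω = z ∧ V₁ ω = v}, Y₁ ω ∂P₁
      = ∫ ω in {ω | T₂ ω = true ∧ Z₂ ω = z ∧ V₂ ω = v}, Y₂ ω ∂P₂ :=
    fun z v => setIntegral_preimage_eq_of_map_eq hW₁ hW₂ hobs (hTZV z v) measurable_fst
  refine ⟨funext₂ fun z v => ?_, funext₂ fun z v => ?_, funext₂ fun z v => ?_⟩ <;>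
    refine mul_right_cancel₀ (h₁.measureReal_zv_ne_zero z v) ?_
  · rw [← h₁.measureReal_T_eq_probT, hT, h₂.measureReal_T_eq_probT, hπ]
  · rw [← h₁.integral_Y_zv_eq_meanY, hY, h₂.integral_Y_zv_eq_meanY, hπ]
  · rw [← h₁.integral_Y_T_eq_meanYT, hYT, h₂.integral_Y_T_eq_meanYT, hπ]

/-- **Proposition 1** (identification): if two models of a misclassified endogenous
binary regressor satisfying Assumptions 1 and 2 induce the same joint distribution
of the observables `(Y, T, Z, V)`, then they have the same `α(v)` and `β(v)`, the
same misclassification probabilities `P(T = 1 | T* = t*, Z = z)`, and the same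
`P(T* = 1 | Z = z, V = v)`. -/
theorem identification_of_misclassified_endogenous_regressor
    {Ω₁ Ω₂ : Type*} [MeasurableSpace Ω₁] [MeasurableSpace Ω₂]
    (P₁ : Measure Ω₁) (P₂ : Measure Ω₂)
    (Y₁ : Ω₁ → ℝ) (T₁ Ts₁ Z₁ V₁ : Ω₁ → Bool) (α₁ β₁ : Bool → ℝ)
    (Y₂ : Ω₂ → ℝ) (T₂ Ts₂ Z₂ V₂ : Ω₂ → Bool) (α₂ β₂ : Bool → ℝ)
    (h₁ : ModelAssumptions P₁ Y₁ T₁ Ts₁ Z₁ V₁ α₁ β₁)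
    (h₂ : ModelAssumptions P₂ Y₂ T₂ Ts₂ Z₂ V₂ α₂ β₂)
    (hobs : Measure.map (fun ω => (Y₁ ω, T₁ ω, Z₁ ω, V₁ ω)) P₁
          = Measure.map (fun ω => (Y₂ ω, T₂ ω, Z₂ ω, V₂ ω)) P₂) :
    (∀ v : Bool, α₁ v = α₂ v ∧ β₁ v = β₂ v) ∧
    (∀ t' z : Bool,
      cPr P₁ {ω | T₁ ω = true} {ω | Ts₁ ω = t' ∧ Z₁ ω = z}
        = cPr P₂ {ω | T₂ ω = true} {ω | Ts₂ ω = t' ∧ Z₂ ω = z}) ∧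
    (∀ z v : Bool, pStar P₁ Ts₁ Z₁ V₁ z v = pStar P₂ Ts₂ Z₂ V₂ z v) := by
  obtain ⟨hq, hr, hs⟩ := h₁.moments_eq_of_map_eq h₂ hobs
  have hθ := MisclassParams.eq_of_moments_eq h₁.beta_ne_zero (fun z => (h₁.a1f z).2.1) h₁.a1h
    h₁.a2 (fun z => (h₂.a1f z).2.1) hq hr hs
  refine ⟨fun v => ⟨congrFun (congrArg MisclassParams.α hθ) v,
    congrFun (congrArg MisclassParams.β hθ) v⟩, fun t' z => ?_,
    fun z v => congrFun₂ (congrArg MisclassParams.p hθ) z v⟩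
  cases t'
  exacts [congrFun (congrArg MisclassParams.fpr hθ) z,
    congrFun (congrArg MisclassParams.tpr hθ) z]
end

section
/- If θ and θ' are two admissible tuples whose moments (m₁, m₂, m₃) coincide for all (z, v) ∈ {0,1}², then θ = θ', i.e., a₀ = a₀', a₁ = a₁', q₀ = q₀', q₁ = q₁', p = p', α = α', and β = β'. -/
/-- A parameter tuple `θ = (a₀, a₁, q₀, q₁, p, α, β)` of the moment system:
`a₀(v), a₁(v)` play the role of `E[Y | T* = 0, V = v]`, `E[Y | T* = 1, V = v]`,
`q_t(z)` of `P(T = 1 | T* = t, Z = z)`, and `p(z, v)` of `P(T* = 1 | Z = z, V = v)`.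
Binary arguments are encoded with `0 = false`, `1 = true`. -/
structure ParamTuple where
  a₀ : Bool → ℝ
  a₁ : Bool → ℝ
  q₀ : Bool → ℝ
  q₁ : Bool → ℝ
  p : Bool → Bool → ℝ
  α : Bool → ℝ
  β : Bool → ℝ

namespace ParamTuple

/-- First moment: `m₁(z, v) = a₀(v)(1 − p(z, v)) + a₁(v)p(z, v)`. -/
def m₁ (θ : ParamTuple) (z v : Bool) : ℝ :=
  θ.a₀ v * (1 - θ.p z v) + θ.a₁ v * θ.p z v

/-- Second moment: `m₂(z, v) = q₀(z)(1 − p(z, v)) + q₁(z)p(z, v)`. -/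
def m₂ (θ : ParamTuple) (z v : Bool) : ℝ :=
  θ.q₀ z * (1 - θ.p z v) + θ.q₁ z * θ.p z v

/-- Third moment: `m₃(z, v) = a₀(v)q₀(z)(1 − p(z, v)) + a₁(v)q₁(z)p(z, v)`. -/
def m₃ (θ : ParamTuple) (z v : Bool) : ℝ :=
  θ.a₀ v * θ.q₀ z * (1 - θ.p z v) + θ.a₁ v * θ.q₁ z * θ.p z v

/-- Admissibility of a tuple: conditions (i)–(vi) together with the
outcome-equation restriction `m₁(z, v) = α(v) + β(v)p(z, v)`. -/
def Admissible (θ : ParamTuple) : Prop :=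
  (∀ z : Bool, 0 < θ.q₀ z ∧ θ.q₀ z < θ.q₁ z ∧ θ.q₁ z < 1) ∧
  (∀ z v : Bool, 0 < θ.p z v ∧ θ.p z v < 1) ∧
  (∀ v : Bool, θ.a₀ v ≠ θ.a₁ v) ∧
  (∀ v : Bool, θ.p false v ≠ θ.p true v) ∧
  (∀ z : Bool, θ.p z false ≠ θ.p z true) ∧
  (((1 - θ.p false false) * (1 - θ.p true true))
      / ((1 - θ.p true false) * (1 - θ.p false true))
    ≠ (θ.p false false * θ.p true true) / (θ.p true false * θ.p false true)) ∧
  (∀ z v : Bool, θ.m₁ z v = θ.α v + θ.β v * θ.p z v)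

end ParamTuple
set_option linter.unusedVariables false

/-- Entry (1,1) of `M₀₀ ⬝ adj(M₁₀) ⬝ M₁₁ ⬝ adj(M₀₁)` where
`M_zv = [[1, u_zv], [w_zv, t_zv]]`. -/
def ptiP11 (u00 u01 u10 u11 w00 w01 w10 w11 t00 t01 t10 t11 : ℝ) : ℝ :=
  (t10 - u00*w10) * (t01 - u11*w01) + (u00 - u10) * (w11*t01 - t11*w01)

/-- Entry (1,2) of the same matrix product. -/
def ptiP12 (u00 u01 u10 u11 w00 w01 w10 w11 t00 t01 t10 t11 : ℝ) : ℝ :=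
  (t10 - u00*w10) * (u11 - u01) + (u00 - u10) * (t11 - w11*u01)

/-- Entry (2,1) of the same matrix product. -/
def ptiP21 (u00 u01 u10 u11 w00 w01 w10 w11 t00 t01 t10 t11 : ℝ) : ℝ :=
  (w00*t10 - t00*w10) * (t01 - u11*w01) + (t00 - w00*u10) * (w11*t01 - t11*w01)

/-- Entry (2,2) of the same matrix product. -/
def ptiP22 (u00 u01 u10 u11 w00 w01 w10 w11 t00 t01 t10 t11 : ℝ) : ℝ :=
  (w00*t10 - t00*w10) * (u11 - u01) + (t00 - w00*u10) * (t11 - w11*u01)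

/-- The characteristic quadratic `P₁₂ q² + (P₁₁ − P₂₂) q − P₂₁` whose roots are
`q₀(0)` and `q₁(0)`. -/
def ptiF (q u00 u01 u10 u11 w00 w01 w10 w11 t00 t01 t10 t11 : ℝ) : ℝ :=
  ptiP12 u00 u01 u10 u11 w00 w01 w10 w11 t00 t01 t10 t11 * q^2
  + (ptiP11 u00 u01 u10 u11 w00 w01 w10 w11 t00 t01 t10 t11
     - ptiP22 u00 u01 u10 u11 w00 w01 w10 w11 t00 t01 t10 t11) * q
  - ptiP21 u00 u01 u10 u11 w00 w01 w10 w11 t00 t01 t10 t11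

/-- Master algebraic identities: if the 12 moment values `u, w, t` come from the
parametric model, then `q₀(0), q₁(0)` are roots of the quadratic `ptiF` built
from the moments, `q₀(1), q₁(1)` are roots of the `z`-swapped quadratic, and the
leading coefficients factor explicitly. -/
theorem ptiMaster (a00 a01 a10 a11 qa0 qb0 qa1 qb1 p00 p01 p10 p11
    u00 u01 u10 u11 w00 w01 w10 w11 t00 t01 t10 t11 : ℝ)
    (hu00 : u00 = a00*(1-p00) + a10*p00) (hu01 : u01 = a01*(1-p01) + a11*p01)
    (hu10 : u10 = a00*(1-p10) + a10*p10) (hu11 : u11 = a01*(1-p11) + a11*p11)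
    (hw00 : w00 = qa0*(1-p00) + qb0*p00) (hw01 : w01 = qa0*(1-p01) + qb0*p01)
    (hw10 : w10 = qa1*(1-p10) + qb1*p10) (hw11 : w11 = qa1*(1-p11) + qb1*p11)
    (ht00 : t00 = a00*qa0*(1-p00) + a10*qb0*p00) (ht01 : t01 = a01*qa0*(1-p01) + a11*qb0*p01)
    (ht10 : t10 = a00*qa1*(1-p10) + a10*qb1*p10) (ht11 : t11 = a01*qa1*(1-p11) + a11*qb1*p11) :
    ptiF qa0 u00 u01 u10 u11 w00 w01 w10 w11 t00 t01 t10 t11 = 0 ∧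
    ptiF qb0 u00 u01 u10 u11 w00 w01 w10 w11 t00 t01 t10 t11 = 0 ∧
    ptiF qa1 u10 u11 u00 u01 w10 w11 w00 w01 t10 t11 t00 t01 = 0 ∧
    ptiF qb1 u10 u11 u00 u01 w10 w11 w00 w01 t10 t11 t00 t01 = 0 ∧
    ptiP12 u00 u01 u10 u11 w00 w01 w10 w11 t00 t01 t10 t11 * (qb0 - qa0)
      = (a10-a00)*(a11-a01)*(qb0-qa0)*(qb1-qa1)
        *(p00*p11*(1-p10)*(1-p01) - p10*p01*(1-p00)*(1-p11)) ∧
    ptiP12 u10 u11 u00 u01 w10 w11 w00 w01 t10 t11 t00 t01 * (qb1 - qa1)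
      = (a10-a00)*(a11-a01)*(qb0-qa0)*(qb1-qa1)
        *(p10*p01*(1-p00)*(1-p11) - p00*p11*(1-p10)*(1-p01)) := by
  subst hu00 hu01 hu10 hu11 hw00 hw01 hw10 hw11 ht00 ht01 ht10 ht11
  refine ⟨?_, ?_, ?_, ?_, ?_, ?_⟩ <;>
    · simp only [ptiF, ptiP11, ptiP12, ptiP21, ptiP22]
      ring

/-- A quadratic with nonzero leading coefficient has at most two roots: two
ordered pairs of roots coincide. -/
theorem ptiQuad {c2 c1 c0 r s r' s' : ℝ} (h2 : c2 ≠ 0)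
    (hr : c2 * r ^ 2 + c1 * r - c0 = 0) (hs : c2 * s ^ 2 + c1 * s - c0 = 0)
    (hr' : c2 * r' ^ 2 + c1 * r' - c0 = 0) (hs' : c2 * s' ^ 2 + c1 * s' - c0 = 0)
    (hlt : r < s) (hlt' : r' < s') : r = r' ∧ s = s' := by
  have h6 : c1 + c2 * (r + s) = 0 := by
    have h5 : (r - s) * (c1 + c2 * (r + s)) = 0 := by linear_combination hr - hs
    rcases mul_eq_zero.1 h5 with h | h
    · exact absurd (by linarith : r = s) hlt.ne
    · exact h
  have key : ∀ x : ℝ, c2 * x ^ 2 + c1 * x - c0 = 0 → (x - r) * (x - s) = 0 := by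
    intro x hx
    have h8 : c2 * ((x - r) * (x - s)) = 0 := by
      linear_combination hx - hr - (x - r) * h6
    exact (mul_eq_zero.1 h8).resolve_left h2
  have Kr := key r' hr'
  have Ks := key s' hs'
  rcases mul_eq_zero.1 Kr with h | h
  · rcases mul_eq_zero.1 Ks with g | g
    · exfalso; linarith
    · exact ⟨by linarith, by linarith⟩
  · rcases mul_eq_zero.1 Ks with g | g
    · exfalso; linarith
    · exfalso; linarith

/-- Two-point linear independence: if `x(1−p) + yp = 0` at two distinct values
`p ≠ q`, then `x = y = 0`. -/
theorem ptiLin2 {x y p q : ℝ} (h1 : x * (1 - p) + y * p = 0)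
    (h2 : x * (1 - q) + y * q = 0) (hpq : p ≠ q) : x = 0 ∧ y = 0 := by
  have h3 : (x - y) * (p - q) = 0 := by linear_combination h2 - h1
  rcases mul_eq_zero.1 h3 with h | h
  · have hxy : x = y := by linarith
    subst hxy
    have hx : x = 0 := by linear_combination h1
    exact ⟨hx, hx⟩
  · exact absurd (by linarith : p = q) hpq

/-- Affine version: if `x + yp = 0` at two distinct values `p ≠ q`,
then `x = y = 0`. -/
theorem ptiLin2' {x y p q : ℝ} (h1 : x + y * p = 0)
    (h2 : x + y * q = 0) (hpq : p ≠ q) : x = 0 ∧ y = 0 := by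
  have hy : y = 0 := by
    have h3 : y * (p - q) = 0 := by linear_combination h1 - h2
    rcases mul_eq_zero.1 h3 with h | h
    · exact h
    · exact absurd (by linarith : p = q) hpq
  exact ⟨by rw [hy] at h1; linarith, hy⟩

/-- **Uniqueness of the solution of the moment system** (algebraic core of
Proposition 1): two admissible tuples with the same moments `(m₁, m₂, m₃)`
at all `(z, v) ∈ {0,1}²` are equal. -/
theorem paramTuple_identification (θ θ' : ParamTuple)
    (hθ : θ.Admissible) (hθ' : θ'.Admissible)
    (h₁ : ∀ z v : Bool, θ.m₁ z v = θ'.m₁ z v)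
    (h₂ : ∀ z v : Bool, θ.m₂ z v = θ'.m₂ z v)
    (h₃ : ∀ z v : Bool, θ.m₃ z v = θ'.m₃ z v) :
    θ = θ' := by
  obtain ⟨hq, hp, ha, hpZ, hpV, hodds, hout⟩ := hθ
  obtain ⟨hq', hp', ha', hpZ', hpV', hodds', hout'⟩ := hθ'
  -- instantiate the master identities for θ
  have Hθ := ptiMaster (θ.a₀ false) (θ.a₀ true) (θ.a₁ false) (θ.a₁ true)
      (θ.q₀ false) (θ.q₁ false) (θ.q₀ true) (θ.q₁ true)
      (θ.p false false) (θ.p false true) (θ.p true false) (θ.p true true)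
      (θ.m₁ false false) (θ.m₁ false true) (θ.m₁ true false) (θ.m₁ true true)
      (θ.m₂ false false) (θ.m₂ false true) (θ.m₂ true false) (θ.m₂ true true)
      (θ.m₃ false false) (θ.m₃ false true) (θ.m₃ true false) (θ.m₃ true true)
      rfl rfl rfl rfl rfl rfl rfl rfl rfl rfl rfl rfl
  -- instantiate the master identities for θ' (with the *same* moment values)
  have Hθ' := ptiMaster (θ'.a₀ false) (θ'.a₀ true) (θ'.a₁ false) (θ'.a₁ true)
      (θ'.q₀ false) (θ'.q₁ false) (θ'.q₀ true) (θ'.q₁ true)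
      (θ'.p false false) (θ'.p false true) (θ'.p true false) (θ'.p true true)
      (θ.m₁ false false) (θ.m₁ false true) (θ.m₁ true false) (θ.m₁ true true)
      (θ.m₂ false false) (θ.m₂ false true) (θ.m₂ true false) (θ.m₂ true true)
      (θ.m₃ false false) (θ.m₃ false true) (θ.m₃ true false) (θ.m₃ true true)
      ((h₁ false false).trans rfl) ((h₁ false true).trans rfl)
      ((h₁ true false).trans rfl) ((h₁ true true).trans rfl)
      ((h₂ false false).trans rfl) ((h₂ false true).trans rfl)
      ((h₂ true false).trans rfl) ((h₂ true true).trans rfl)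
      ((h₃ false false).trans rfl) ((h₃ false true).trans rfl)
      ((h₃ true false).trans rfl) ((h₃ true true).trans rfl)
  obtain ⟨C1, C2, C3, C4, C5, C6⟩ := Hθ
  obtain ⟨D1, D2, D3, D4, -, -⟩ := Hθ'
  -- basic positivity facts
  have hpa := hp false false
  have hpb := hp false true
  have hpc := hp true false
  have hpd := hp true true
  -- the odds-ratio condition gives nonvanishing of the bracket
  have hbr : θ.p false false * θ.p true true * (1 - θ.p true false) * (1 - θ.p false true)
      - θ.p true false * θ.p false true * (1 - θ.p false false) * (1 - θ.p true true) ≠ 0 := by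
    intro h
    apply hodds
    rw [div_eq_div_iff
      (ne_of_gt (mul_pos (by linarith [hpc.2] : (0:ℝ) < 1 - θ.p true false)
        (by linarith [hpb.2] : (0:ℝ) < 1 - θ.p false true)))
      (ne_of_gt (mul_pos hpc.1 hpb.1))]
    linear_combination -h
  -- nonvanishing factors
  have hb0 : θ.a₁ false - θ.a₀ false ≠ 0 := sub_ne_zero.2 (Ne.symm (ha false))
  have hb1 : θ.a₁ true - θ.a₀ true ≠ 0 := sub_ne_zero.2 (Ne.symm (ha true))
  have hd0 : θ.q₁ false - θ.q₀ false ≠ 0 := sub_ne_zero.2 (ne_of_gt (hq false).2.1)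
  have hd1 : θ.q₁ true - θ.q₀ true ≠ 0 := sub_ne_zero.2 (ne_of_gt (hq true).2.1)
  -- leading coefficients of the two quadratics are nonzero
  have hP12a : ptiP12 (θ.m₁ false false) (θ.m₁ false true) (θ.m₁ true false) (θ.m₁ true true)
      (θ.m₂ false false) (θ.m₂ false true) (θ.m₂ true false) (θ.m₂ true true)
      (θ.m₃ false false) (θ.m₃ false true) (θ.m₃ true false) (θ.m₃ true true) ≠ 0 := by
    intro h
    rw [h, zero_mul] at C5
    exact (mul_ne_zero (mul_ne_zero (mul_ne_zero (mul_ne_zero hb0 hb1) hd0) hd1) hbr) C5.symm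
  have hbr' : θ.p true false * θ.p false true * (1 - θ.p false false) * (1 - θ.p true true)
      - θ.p false false * θ.p true true * (1 - θ.p true false) * (1 - θ.p false true) ≠ 0 := by
    intro h; exact hbr (by linarith)
  have hP12b : ptiP12 (θ.m₁ true false) (θ.m₁ true true) (θ.m₁ false false) (θ.m₁ false true)
      (θ.m₂ true false) (θ.m₂ true true) (θ.m₂ false false) (θ.m₂ false true)
      (θ.m₃ true false) (θ.m₃ true true) (θ.m₃ false false) (θ.m₃ false true) ≠ 0 := by
    intro h
    rw [h, zero_mul] at C6
    exact (mul_ne_zero (mul_ne_zero (mul_ne_zero (mul_ne_zero hb0 hb1) hd0) hd1) hbr') C6.symm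
  -- identify q₀, q₁ at z = 0 and z = 1
  simp only [ptiF] at C1 C2 C3 C4 D1 D2 D3 D4
  have hz0 := ptiQuad hP12a C1 C2 D1 D2 (hq false).2.1 (hq' false).2.1
  have hz1 := ptiQuad hP12b C3 C4 D3 D4 (hq true).2.1 (hq' true).2.1
  have Eq0 : θ.q₀ = θ'.q₀ := funext fun z => by
    cases z with
    | false => exact hz0.1
    | true => exact hz1.1
  have Eq1 : θ.q₁ = θ'.q₁ := funext fun z => by
    cases z with
    | false => exact hz0.2
    | true => exact hz1.2
  -- identify p
  have hpeq : ∀ z v : Bool, θ.p z v = θ'.p z v := by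
    intro z v
    have h := h₂ z v
    simp only [ParamTuple.m₂] at h
    rw [Eq0, Eq1] at h
    have hzero : (θ'.q₁ z - θ'.q₀ z) * (θ.p z v - θ'.p z v) = 0 := by
      linear_combination h
    rcases mul_eq_zero.1 hzero with h' | h'
    · exact absurd h' (sub_ne_zero.2 (ne_of_gt (hq' z).2.1))
    · linarith
  have Ep : θ.p = θ'.p := funext fun z => funext fun v => hpeq z v
  -- identify a₀, a₁
  have haeq : ∀ v : Bool, θ.a₀ v = θ'.a₀ v ∧ θ.a₁ v = θ'.a₁ v := by
    intro v
    have e0 := h₁ false v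
    have e1 := h₁ true v
    simp only [ParamTuple.m₁] at e0 e1
    rw [hpeq false v] at e0
    rw [hpeq true v] at e1
    have hl := ptiLin2 (x := θ.a₀ v - θ'.a₀ v) (y := θ.a₁ v - θ'.a₁ v)
      (p := θ'.p false v) (q := θ'.p true v)
      (by linear_combination e0) (by linear_combination e1) (hpZ' v)
    exact ⟨by linarith [hl.1], by linarith [hl.2]⟩
  have Ea0 : θ.a₀ = θ'.a₀ := funext fun v => (haeq v).1
  have Ea1 : θ.a₁ = θ'.a₁ := funext fun v => (haeq v).2
  -- identify α, β
  have habe : ∀ v : Bool, θ.α v = θ'.α v ∧ θ.β v = θ'.β v := by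
    intro v
    have e0 : θ.α v + θ.β v * θ'.p false v = θ'.α v + θ'.β v * θ'.p false v := by
      have := (hout false v).symm.trans ((h₁ false v).trans (hout' false v))
      rwa [hpeq false v] at this
    have e1 : θ.α v + θ.β v * θ'.p true v = θ'.α v + θ'.β v * θ'.p true v := by
      have := (hout true v).symm.trans ((h₁ true v).trans (hout' true v))
      rwa [hpeq true v] at this
    have hl := ptiLin2' (x := θ.α v - θ'.α v) (y := θ.β v - θ'.β v)
      (p := θ'.p false v) (q := θ'.p true v)
      (by linear_combination e0) (by linear_combination e1) (hpZ' v)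
    exact ⟨by linarith [hl.1], by linarith [hl.2]⟩
  have Eα : θ.α = θ'.α := funext fun v => (habe v).1
  have Eβ : θ.β = θ'.β := funext fun v => (habe v).2
  calc θ = ⟨θ'.a₀, θ'.a₁, θ'.q₀, θ'.q₁, θ'.p, θ'.α, θ'.β⟩ := by
        rw [← Ea0, ← Ea1, ← Eq0, ← Eq1, ← Ep, ← Eα, ← Eβ]
    _ = θ' := rfl
end

section
/- Let (Ω, F, P) be a probability space, Y an integrable real random variable, and T, T*, Z, V random variables taking values in {0,1} such that every event {T = t, T* = t*, Z = z, V = v} has positive probability. Assume: (a) E[Y | T = t, T* = t*, Z = z, V = v] = E[Y | T* = t*, Z = z, V = v] for all t, t*, z, v; (b) E[Y | T* = t*, Z = z, V = v] = E[Y | T* = t*, V = v] for all t*, z, v; (d) P(T = 1 | T* = t*, Z = z, V = v) = P(T = 1 | T* = t*, Z = z) for all t*, z, v. Then for all (z, v) ∈ {0,1}²: E[Y | Z = z, V = v] = Σ_{t* ∈ {0,1}} E[Y | T* = t*, V = v] · P(T* = t* | Z = z, V = v); E[T | Z = z, V = v] = Σ_{t* ∈ {0,1}} P(T = 1 | T*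 = t*, Z = z) · P(T* = t* | Z = z, V = v); and E[Y·T | Z = z, V = v] = Σ_{t* ∈ {0,1}} E[Y | T* = t*, V = v] · P(T = 1 | T* = t*, Z = z) · P(T* = t* | Z = z, V = v). -/
open MeasureTheory

/-!
Each identity is the law of total expectation over the cells `{T* = t'}` of
`S = {Z = z, V = v}`: `E[X | S] = ∑ t', E[X | S ∩ {T* = t'}] · P(T* = t' | S)`.
For `X = T` and `X = Y · T` one conditions further on `{T = 1}` inside each cell; then (a) and (b)
turn the cell-wise mean of `Y` into `E[Y | T* = t', V = v]`, and (d) turns the cell-wise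
probability of `T = 1` into `P(T = 1 | T* = t', Z = z)`.
-/

section
variable {Ω : Type*} [MeasurableSpace Ω] {P : Measure Ω}

theorem setIntegral_eq_sum_setIntegral_inter_fiber {E β : Type*} [NormedAddCommGroup E]
    [NormedSpace ℝ E] [Fintype β] [MeasurableSpace β] [MeasurableSingletonClass β] {W : Ω → β}
    (hW : Measurable W) {X : Ω → E} {A : Set Ω} (hX : IntegrableOn X A P) :
    ∫ ω in A, X ω ∂P = ∑ b, ∫ ω in A ∩ {ω | W ω = b}, X ω ∂P := by
  have hfiber (b : β) : MeasurableSet {ω | W ω = b} := hW (measurableSet_singleton b)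
  have hcover : (⋃ b, {ω | W ω = b}) = Set.univ := Set.iUnion_eq_univ_iff.2 fun ω => ⟨W ω, rfl⟩
  calc ∫ ω in A, X ω ∂P = ∫ ω in ⋃ b, {ω | W ω = b}, X ω ∂P.restrict A := by
        rw [hcover, Measure.restrict_univ]
    _ = ∑ b, ∫ ω in A ∩ {ω | W ω = b}, X ω ∂P := by
        rw [integral_iUnion_fintype hfiber _ fun _ => Integrable.integrableOn hX]
        · simp only [Measure.restrict_restrict (hfiber _), Set.inter_comm]
        · exact fun b b' hbb' => Set.disjoint_left.2 fun ω hb hb' => hbb' (hb.symm.trans hb')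

-- A null cell `A ∩ B` contributes `0` on both sides, because `x / 0 = 0`.
theorem cExp_inter_mul_cPr [IsFiniteMeasure P] (X : Ω → ℝ) (A B : Set Ω) :
    cExp P X (A ∩ B) * cPr P B A = (∫ ω in A ∩ B, X ω ∂P) / (P A).toReal := by
  rcases eq_or_ne (P (A ∩ B)) 0 with hAB | hAB
  · simp [cPr, hAB, setIntegral_measure_zero X hAB]
  · have : (P (A ∩ B)).toReal ≠ 0 := ENNReal.toReal_ne_zero.2 ⟨hAB, measure_ne_top P _⟩
    unfold cExp cPr
    field_simp

theorem cExp_eq_sum_cExp_mul_cPr [IsFiniteMeasure P] {β : Type*} [Fintype β] [MeasurableSpace β]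
    [MeasurableSingletonClass β] {W : Ω → β} (hW : Measurable W) {X : Ω → ℝ} {A : Set Ω}
    (hX : IntegrableOn X A P) :
    cExp P X A = ∑ b, cExp P X (A ∩ {ω | W ω = b}) * cPr P {ω | W ω = b} A := by
  simp only [cExp_inter_mul_cPr, ← Finset.sum_div,
    ← setIntegral_eq_sum_setIntegral_inter_fiber hW hX]
  rfl

theorem cExp_indicator [IsFiniteMeasure P] {B : Set Ω} (hB : MeasurableSet B) (X : Ω → ℝ)
    (A : Set Ω) :
    cExp P (B.indicator X) A = cExp P X (A ∩ B) * cPr P B A := by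
  rw [cExp_inter_mul_cPr, cExp, setIntegral_indicator hB]

theorem cExp_indicator_one {B : Set Ω} (hB : MeasurableSet B) (A : Set Ω) :
    cExp P (B.indicator fun _ => 1) A = cPr P B A := by
  rw [cExp, cPr, setIntegral_indicator hB]
  simp [measureReal_def]

end

theorem b2r_comp_eq_indicator {Ω : Type*} (T : Ω → Bool) :
    (fun ω => b2r (T ω)) = {ω | T ω = true}.indicator fun _ => 1 := by
  ext ω; cases h : T ω <;> simp [b2r, h]

theorem mul_b2r_comp_eq_indicator {Ω : Type*} (Y : Ω → ℝ) (T : Ω → Bool) :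
    (fun ω => Y ω * b2r (T ω)) = {ω | T ω = true}.indicator Y := by
  ext ω; cases h : T ω <;> simp [b2r, h]

theorem moment_system_general
    {Ω : Type*} [MeasurableSpace Ω] (P : Measure Ω) [IsProbabilityMeasure P]
    (Y : Ω → ℝ) (hYint : Integrable Y P)
    (T Tstar Z V : Ω → Bool)
    (hT : Measurable T) (hTstar : Measurable Tstar)
    -- (a): E[Y | T, T*, Z, V] = E[Y | T*, Z, V]
    (ha : ∀ t t' z v : Bool,
      cExp P Y {ω | T ω = t ∧ Tstar ω = t' ∧ Z ω = z ∧ V ω = v}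
        = cExp P Y {ω | Tstar ω = t' ∧ Z ω = z ∧ V ω = v})
    -- (b): E[Y | T*, Z, V] = E[Y | T*, V]
    (hb : ∀ t' z v : Bool,
      cExp P Y {ω | Tstar ω = t' ∧ Z ω = z ∧ V ω = v}
        = cExp P Y {ω | Tstar ω = t' ∧ V ω = v})
    -- (d): P(T = 1 | T*, Z, V) = P(T = 1 | T*, Z)
    (hd : ∀ t' z v : Bool,
      cPr P {ω | T ω = true} {ω | Tstar ω = t' ∧ Z ω = z ∧ V ω = v}
        = cPr P {ω | T ω = true} {ω | Tstar ω = t' ∧ Z ω = z}) :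
    ∀ z v : Bool,
      (cExp P Y {ω | Z ω = z ∧ V ω = v}
        = ∑ t' : Bool, cExp P Y {ω | Tstar ω = t' ∧ V ω = v}
            * cPr P {ω | Tstar ω = t'} {ω | Z ω = z ∧ V ω = v}) ∧
      (cExp P (fun ω => b2r (T ω)) {ω | Z ω = z ∧ V ω = v}
        = ∑ t' : Bool, cPr P {ω | T ω = true} {ω | Tstar ω = t' ∧ Z ω = z}
            * cPr P {ω | Tstar ω = t'} {ω | Z ω = z ∧ V ω = v}) ∧
      (cExp P (fun ω => Y ω * b2r (T ω)) {ω | Z ω = z ∧ V ω = v}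
        = ∑ t' : Bool, cExp P Y {ω | Tstar ω = t' ∧ V ω = v}
            * cPr P {ω | T ω = true} {ω | Tstar ω = t' ∧ Z ω = z}
            * cPr P {ω | Tstar ω = t'} {ω | Z ω = z ∧ V ω = v}) := by
  intro z v
  have hTtrue : MeasurableSet {ω | T ω = true} := hT (measurableSet_singleton true)
  have hcell (t' : Bool) : {ω | Z ω = z ∧ V ω = v} ∩ {ω | Tstar ω = t'}
      = {ω | Tstar ω = t' ∧ Z ω = z ∧ V ω = v} := by
    ext ω; simp only [Set.mem_inter_iff, Set.mem_ofPred_eq]; tauto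
  have hcell_treated (t' : Bool) : {ω | Tstar ω = t' ∧ Z ω = z ∧ V ω = v} ∩ {ω | T ω = true}
      = {ω | T ω = true ∧ Tstar ω = t' ∧ Z ω = z ∧ V ω = v} := Set.inter_comm _ _
  refine ⟨?_, ?_, ?_⟩
  · rw [cExp_eq_sum_cExp_mul_cPr hTstar hYint.integrableOn]
    simp only [hcell, hb]
  · rw [b2r_comp_eq_indicator, cExp_eq_sum_cExp_mul_cPr hTstar
      ((integrable_const 1).indicator hTtrue).integrableOn]
    simp only [hcell, cExp_indicator_one hTtrue, hd]
  · rw [mul_b2r_comp_eq_indicator, cExp_eq_sum_cExp_mul_cPr hTstar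
      (hYint.indicator hTtrue).integrableOn]
    simp only [hcell, cExp_indicator hTtrue, hcell_treated, ha, hb, hd]

/-- **The moment-equation system** (equation "(system)" of the paper), derived from
Assumption 1(a)(b)(d): decomposition of `E[Y | Z, V]`, `E[T | Z, V]` and
`E[YT | Z, V]` as mixtures over the latent `T*` (with `1 = true`, `0 = false`). -/
theorem moment_system
    {Ω : Type*} [MeasurableSpace Ω] (P : Measure Ω) [IsProbabilityMeasure P]
    (Y : Ω → ℝ) (hYmeas : Measurable Y) (hYint : Integrable Y P)
    (T Tstar Z V : Ω → Bool)
    (hT : Measurable T) (hTstar : Measurable Tstar)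
    (hZ : Measurable Z) (hV : Measurable V)
    (hpos : ∀ t t' z v : Bool,
      0 < P {ω | T ω = t ∧ Tstar ω = t' ∧ Z ω = z ∧ V ω = v})
    -- (a): E[Y | T, T*, Z, V] = E[Y | T*, Z, V]
    (ha : ∀ t t' z v : Bool,
      cExp P Y {ω | T ω = t ∧ Tstar ω = t' ∧ Z ω = z ∧ V ω = v}
        = cExp P Y {ω | Tstar ω = t' ∧ Z ω = z ∧ V ω = v})
    -- (b): E[Y | T*, Z, V] = E[Y | T*, V]
    (hb : ∀ t' z v : Bool,
      cExp P Y {ω | Tstar ω = t' ∧ Z ω = z ∧ V ω = v}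
        = cExp P Y {ω | Tstar ω = t' ∧ V ω = v})
    -- (d): P(T = 1 | T*, Z, V) = P(T = 1 | T*, Z)
    (hd : ∀ t' z v : Bool,
      cPr P {ω | T ω = true} {ω | Tstar ω = t' ∧ Z ω = z ∧ V ω = v}
        = cPr P {ω | T ω = true} {ω | Tstar ω = t' ∧ Z ω = z}) :
    ∀ z v : Bool,
      (cExp P Y {ω | Z ω = z ∧ V ω = v}
        = ∑ t' : Bool, cExp P Y {ω | Tstar ω = t' ∧ V ω = v}
            * cPr P {ω | Tstar ω = t'} {ω | Z ω = z ∧ V ω = v}) ∧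
      (cExp P (fun ω => b2r (T ω)) {ω | Z ω = z ∧ V ω = v}
        = ∑ t' : Bool, cPr P {ω | T ω = true} {ω | Tstar ω = t' ∧ Z ω = z}
            * cPr P {ω | Tstar ω = t'} {ω | Z ω = z ∧ V ω = v}) ∧
      (cExp P (fun ω => Y ω * b2r (T ω)) {ω | Z ω = z ∧ V ω = v}
        = ∑ t' : Bool, cExp P Y {ω | Tstar ω = t' ∧ V ω = v}
            * cPr P {ω | T ω = true} {ω | Tstar ω = t' ∧ Z ω = z}
            * cPr P {ω | Tstar ω = t'} {ω | Z ω = z ∧ V ω = v}) :=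
  moment_system_general P Y hYint T Tstar Z V hT hTstar ha hb hd
end

section
/- Let n ≥ 1 and, for each (z, v) ∈ {0,1}², let L_T(z), L_Y(v) be invertible n × n real matrices, let Λ(z, v) be a diagonal invertible n × n real matrix, and set Q(z, v) := L_T(z) · Λ(z, v) · L_Y(v)ᵀ. Then Q(0,0)ᵀ · (Q(0,1)ᵀ)⁻¹ · Q(1,1)ᵀ · (Q(1,0)ᵀ)⁻¹ = L_Y(0) · Λ̃ · L_Y(0)⁻¹, where Λ̃ := Λ(0,0) · Λ(1,0)⁻¹ · Λ(1,1) · Λ(0,1)⁻¹. -/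
open Matrix

/-- **Transposed similarity identity** used in the proofs of Propositions 1 and 3
to identify `L_Y(0)`: if `Q(z, v) = L_T(z) · Λ(z, v) · L_Y(v)ᵀ` with `L_T(z)`,
`L_Y(v)` invertible and `Λ(z, v)` diagonal and invertible, then
`Q(0,0)ᵀ (Q(0,1)ᵀ)⁻¹ Q(1,1)ᵀ (Q(1,0)ᵀ)⁻¹ = L_Y(0) Λ̃ L_Y(0)⁻¹` where
`Λ̃ = Λ(0,0) Λ(1,0)⁻¹ Λ(1,1) Λ(0,1)⁻¹` (binary indices: `0 = false`, `1 = true`). -/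
theorem transposed_similarity_identity {n : ℕ} (hn : 1 ≤ n)
    (LT LY : Bool → Matrix (Fin n) (Fin n) ℝ)
    (Λ : Bool → Bool → Matrix (Fin n) (Fin n) ℝ)
    (hLT : ∀ z, IsUnit (LT z).det) (hLY : ∀ v, IsUnit (LY v).det)
    (hΛdiag : ∀ z v, (Λ z v).IsDiag) (hΛinv : ∀ z v, IsUnit (Λ z v).det)
    (Q : Bool → Bool → Matrix (Fin n) (Fin n) ℝ)
    (hQ : ∀ z v, Q z v = LT z * Λ z v * (LY v)ᵀ) :
    (Q false false)ᵀ * ((Q false true)ᵀ)⁻¹ * (Q true true)ᵀ * ((Q true false)ᵀ)⁻¹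
      = LY false * (Λ false false * (Λ true false)⁻¹ * Λ true true * (Λ false true)⁻¹)
          * (LY false)⁻¹ := by
  have hΛsym : ∀ z v, (Λ z v)ᵀ = Λ z v := fun z v => (hΛdiag z v).isSymm
  have hLTinv : ∀ z, IsUnit ((LT z)ᵀ).det := by simpa [Matrix.det_transpose] using hLT
  -- transpose of Q
  have hQt : ∀ z v, (Q z v)ᵀ = LY v * Λ z v * (LT z)ᵀ := by
    intro z v
    rw [hQ, Matrix.transpose_mul, Matrix.transpose_mul, Matrix.transpose_transpose,
      hΛsym, Matrix.mul_assoc]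
  have hQtinv : ∀ z v, ((Q z v)ᵀ)⁻¹ = ((LT z)ᵀ)⁻¹ * (Λ z v)⁻¹ * (LY v)⁻¹ := by
    intro z v
    rw [hQt, Matrix.mul_inv_rev, Matrix.mul_inv_rev, Matrix.mul_assoc]
  rw [hQtinv false true, hQtinv true false, hQt false false, hQt true true]
  -- cancel (LT z)ᵀ with its inverse and LY with its inverse
  have c1 : ∀ z (A B : Matrix (Fin n) (Fin n) ℝ) (C D : Matrix (Fin n) (Fin n) ℝ),
      (A * B * (LT z)ᵀ) * ((LT z)ᵀ⁻¹ * C * D) = A * (B * C) * D := by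
    intro z A B C D
    calc A * B * (LT z)ᵀ * ((LT z)ᵀ⁻¹ * C * D)
        = A * B * ((LT z)ᵀ * ((LT z)ᵀ)⁻¹) * (C * D) := by
          simp only [Matrix.mul_assoc]
      _ = A * (B * C) * D := by
          rw [Matrix.mul_nonsing_inv _ (hLTinv z)]
          simp only [Matrix.mul_one, Matrix.mul_assoc]
  simp only [← Matrix.mul_assoc]
  have hc1 : ∀ A : Matrix (Fin n) (Fin n) ℝ, ∀ z, A * (LT z)ᵀ * ((LT z)ᵀ)⁻¹ = A := by
    intro A z
    rw [Matrix.mul_assoc, Matrix.mul_nonsing_inv _ (hLTinv z), Matrix.mul_one]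
  have hc2 : ∀ A : Matrix (Fin n) (Fin n) ℝ, A * (LY true)⁻¹ * LY true = A := by
    intro A
    rw [Matrix.mul_assoc, Matrix.nonsing_inv_mul _ (hLY true), Matrix.mul_one]
  rw [hc1, hc2, hc1]
  -- goal: LY0 * Λ00 * Λ01⁻¹ * Λ11 * Λ10⁻¹ * LY0⁻¹ = LY0 * Λ00 * Λ10⁻¹ * Λ11 * Λ01⁻¹ * LY0⁻¹
  congr 1
  simp only [Matrix.mul_assoc]
  congr 1
  obtain ⟨d00, h00⟩ : ∃ d, Λ false false = diagonal d := ⟨_, ((hΛdiag false false).diagonal_diag).symm⟩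
  obtain ⟨d01, h01⟩ : ∃ d, Λ false true = diagonal d := ⟨_, ((hΛdiag false true).diagonal_diag).symm⟩
  obtain ⟨d10, h10⟩ : ∃ d, Λ true false = diagonal d := ⟨_, ((hΛdiag true false).diagonal_diag).symm⟩
  obtain ⟨d11, h11⟩ : ∃ d, Λ true true = diagonal d := ⟨_, ((hΛdiag true true).diagonal_diag).symm⟩
  simp only [h00, h01, h10, h11, Matrix.inv_diagonal, Matrix.diagonal_mul_diagonal]
  exact congrArg diagonal (funext fun i => by ring)
end

section
/- Let L, M be invertible 2 × 2 real matrices with first rows (1, 1), and let D, E be diagonal 2 × 2 real matrices with D₁₁ ≠ D₂₂. Suppose L · D · L⁻¹ = M · E · M⁻¹. If in addition L₂₁ < L₂₂ and M₂₁ < M₂₂ (where L₂₁, L₂₂ denote the second-row entries of L, and likewise for M), then L = M and D = E. -/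
open Matrix

/-- **Pinned eigendecomposition uniqueness** (2 × 2 case): if `L`, `M` are invertible
with first rows `(1, 1)`, `D = diagonal d` with `d 0 ≠ d 1`, `E = diagonal e`,
`L D L⁻¹ = M E M⁻¹`, and the second-row entries satisfy the ordering
`L 1 0 < L 1 1` and `M 1 0 < M 1 1`, then `L = M` and `D = E`. -/
theorem pinned_eigendecomposition_uniqueness
    (L M : Matrix (Fin 2) (Fin 2) ℝ)
    (hL : IsUnit L.det) (hM : IsUnit M.det)
    (hLrow : L 0 0 = 1 ∧ L 0 1 = 1) (hMrow : M 0 0 = 1 ∧ M 0 1 = 1)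
    (d e : Fin 2 → ℝ) (hd : d 0 ≠ d 1)
    (h : L * Matrix.diagonal d * L⁻¹ = M * Matrix.diagonal e * M⁻¹)
    (hLord : L 1 0 < L 1 1) (hMord : M 1 0 < M 1 1) :
    L = M ∧ Matrix.diagonal d = Matrix.diagonal e := by
  obtain ⟨hL00, hL01⟩ := hLrow
  obtain ⟨hM00, hM01⟩ := hMrow
  set N := M⁻¹ * L with hN
  have hMN : M * N = L := by
    rw [hN, ← mul_assoc, Matrix.mul_nonsing_inv M hM, one_mul]
  have key : N * Matrix.diagonal d = Matrix.diagonal e * N := by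
    have h2 : L * Matrix.diagonal d = M * Matrix.diagonal e * M⁻¹ * L := by
      calc L * Matrix.diagonal d = L * Matrix.diagonal d * L⁻¹ * L := by
            rw [mul_assoc, Matrix.nonsing_inv_mul L hL, mul_one]
        _ = M * Matrix.diagonal e * M⁻¹ * L := by rw [h]
    rw [hN]
    calc M⁻¹ * L * Matrix.diagonal d = M⁻¹ * (L * Matrix.diagonal d) := by
          rw [mul_assoc]
      _ = M⁻¹ * (M * Matrix.diagonal e * M⁻¹ * L) := by rw [h2]
      _ = Matrix.diagonal e * (M⁻¹ * L) := by
          simp only [← mul_assoc]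
          rw [Matrix.nonsing_inv_mul M hM, one_mul, mul_assoc]
  have hNe : ∀ i j, N i j * d j = e i * N i j := by
    intro i j
    have := congrFun (congrFun key i) j
    simpa [Matrix.mul_diagonal, Matrix.diagonal_mul] using this
  have hNdet : N.det ≠ 0 := by
    have : IsUnit N.det := by
      rw [hN, Matrix.det_mul]
      exact (Matrix.isUnit_nonsing_inv_det M hM).mul hL
    exact this.ne_zero
  have hdet2 : N 0 0 * N 1 1 - N 0 1 * N 1 0 ≠ 0 := by
    rwa [Matrix.det_fin_two] at hNdet
  have hent : ∀ i j, L i j = M i 0 * N 0 j + M i 1 * N 1 j := by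
    intro i j
    rw [← hMN, Matrix.mul_apply, Fin.sum_univ_two]
  by_cases hN00 : N 0 0 = 0
  · -- antidiagonal case, contradiction with ordering
    exfalso
    have hN01 : N 0 1 ≠ 0 := by
      intro h01; apply hdet2; rw [hN00, h01]; ring
    have hN10 : N 1 0 ≠ 0 := by
      intro h10; apply hdet2; rw [hN00, h10]; ring
    have he0 : e 0 = d 1 := by
      have h' := hNe 0 1
      rw [mul_comm (e 0)] at h'
      exact (mul_left_cancel₀ hN01 h').symm
    have he1 : e 1 = d 0 := by
      have h' := hNe 1 0
      rw [mul_comm (e 1)] at h'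
      exact (mul_left_cancel₀ hN10 h').symm
    have hN11 : N 1 1 = 0 := by
      have h' := hNe 1 1
      rw [he1] at h'
      have hz : N 1 1 * (d 1 - d 0) = 0 := by linear_combination h'
      rcases mul_eq_zero.mp hz with h'' | h''
      · exact h''
      · exact absurd (by linarith : d 0 = d 1) hd
    have h10eq1 : N 1 0 = 1 := by
      have := hent 0 0
      rw [hL00, hM00, hM01, hN00] at this
      linarith
    have h01eq1 : N 0 1 = 1 := by
      have := hent 0 1
      rw [hL01, hM00, hM01, hN11] at this
      linarith
    have e1 : L 1 0 = M 1 1 := by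
      have := hent 1 0
      rw [hN00, h10eq1] at this
      linarith
    have e2 : L 1 1 = M 1 0 := by
      have := hent 1 1
      rw [hN11, h01eq1] at this
      linarith
    rw [e1, e2] at hLord
    linarith
  · -- diagonal case
    have he0 : e 0 = d 0 := by
      have h' := hNe 0 0
      rw [mul_comm (e 0)] at h'
      exact (mul_left_cancel₀ hN00 h').symm
    have hN01 : N 0 1 = 0 := by
      have h' := hNe 0 1
      rw [he0] at h'
      have hz : N 0 1 * (d 1 - d 0) = 0 := by linear_combination h'
      rcases mul_eq_zero.mp hz with h'' | h''
      · exact h''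
      · exact absurd (by linarith : d 0 = d 1) hd
    have hN11 : N 1 1 ≠ 0 := by
      intro h11; apply hdet2; rw [hN01, h11]; ring
    have he1 : e 1 = d 1 := by
      have h' := hNe 1 1
      rw [mul_comm (e 1)] at h'
      exact (mul_left_cancel₀ hN11 h').symm
    have hN10 : N 1 0 = 0 := by
      have h' := hNe 1 0
      rw [he1] at h'
      have hz : N 1 0 * (d 0 - d 1) = 0 := by linear_combination h'
      rcases mul_eq_zero.mp hz with h'' | h''
      · exact h''
      · exact absurd (by linarith : d 0 = d 1) hd
    have h00eq1 : N 0 0 = 1 := by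
      have := hent 0 0
      rw [hL00, hM00, hM01, hN10] at this
      linarith
    have h11eq1 : N 1 1 = 1 := by
      have := hent 0 1
      rw [hL01, hM00, hM01, hN01] at this
      linarith
    have hNone : N = 1 := by
      ext i j
      fin_cases i <;> fin_cases j <;>
        simp [h00eq1, h11eq1, hN01, hN10, Matrix.one_apply]
    have hde : d = e := by
      funext i
      fin_cases i
      · exact he0.symm
      · exact he1.symm
    exact ⟨by rw [← hMN, hNone, mul_one], by rw [hde]⟩
end

section
/- If θ and θ' are two Z-admissible tuples whose moments (m₁, m₂, m₃) coincide (m₁(z, v) and m₃(z, v) for all (z, v) ∈ {0,1}² and m₂(z) for all z ∈ {0,1}), then θ = θ', i.e., a₀ = a₀', a₁ = a₁', q₀ = q₀', q₁ = q₁', p = p', α = α', and β = β'. -/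
/-- A parameter tuple `θ = (a₀, a₁, q₀, q₁, p, α, β)` for the moment system of
Proposition 2, in which the latent treatment probability `p` depends only on the
instrument `Z` and the misclassification probabilities `q₀, q₁` depend on neither
`Z` nor `V`. Binary arguments are encoded with `0 = false`, `1 = true`. -/
structure ZParamTuple where
  a₀ : Bool → ℝ
  a₁ : Bool → ℝ
  q₀ : ℝ
  q₁ : ℝ
  p : Bool → ℝ
  α : Bool → ℝ
  β : Bool → ℝ

namespace ZParamTuple

/-- First moment: `m₁(z, v) = a₀(v)(1 − p(z)) + a₁(v)p(z)`. -/
def m₁ (θ : ZParamTuple) (z v : Bool) : ℝ :=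
  θ.a₀ v * (1 - θ.p z) + θ.a₁ v * θ.p z

/-- Second moment: `m₂(z) = q₀(1 − p(z)) + q₁p(z)`. -/
def m₂ (θ : ZParamTuple) (z : Bool) : ℝ :=
  θ.q₀ * (1 - θ.p z) + θ.q₁ * θ.p z

/-- Third moment: `m₃(z, v) = a₀(v)q₀(1 − p(z)) + a₁(v)q₁p(z)`. -/
def m₃ (θ : ZParamTuple) (z v : Bool) : ℝ :=
  θ.a₀ v * θ.q₀ * (1 - θ.p z) + θ.a₁ v * θ.q₁ * θ.p z

/-- Z-admissibility: conditions (i)–(iv) together with the outcome-equation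
restriction `m₁(z, v) = α(v) + β(v)p(z)`. -/
def Admissible (θ : ZParamTuple) : Prop :=
  (0 < θ.q₀ ∧ θ.q₀ < θ.q₁ ∧ θ.q₁ < 1) ∧
  (∀ z : Bool, 0 < θ.p z ∧ θ.p z < 1) ∧
  (θ.p false ≠ θ.p true) ∧
  (∀ v : Bool, θ.a₀ v ≠ θ.a₁ v) ∧
  (∀ z v : Bool, θ.m₁ z v = θ.α v + θ.β v * θ.p z)

end ZParamTuple

/-- Auxiliary extensionality lemma for `ZParamTuple`. -/
theorem ZParamTuple.ext_of (θ θ' : ZParamTuple)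
    (h1 : ∀ v, θ.a₀ v = θ'.a₀ v) (h2 : ∀ v, θ.a₁ v = θ'.a₁ v)
    (h3 : θ.q₀ = θ'.q₀) (h4 : θ.q₁ = θ'.q₁)
    (h5 : ∀ z, θ.p z = θ'.p z)
    (h6 : ∀ v, θ.α v = θ'.α v) (h7 : ∀ v, θ.β v = θ'.β v) : θ = θ' := by
  cases θ; cases θ'
  simp only [ZParamTuple.mk.injEq]
  exact ⟨funext h1, funext h2, h3, h4, funext h5, funext h6, funext h7⟩

/-- **Uniqueness of the solution of the moment system of Proposition 2**
(algebraic core): two Z-admissible tuples with the same moments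
(`m₁(z, v)` and `m₃(z, v)` for all `(z, v)`, and `m₂(z)` for all `z`) are equal. -/
theorem zParamTuple_identification (θ θ' : ZParamTuple)
    (hθ : θ.Admissible) (hθ' : θ'.Admissible)
    (h₁ : ∀ z v : Bool, θ.m₁ z v = θ'.m₁ z v)
    (h₂ : ∀ z : Bool, θ.m₂ z = θ'.m₂ z)
    (h₃ : ∀ z v : Bool, θ.m₃ z v = θ'.m₃ z v) :
    θ = θ' := by
  obtain ⟨⟨hq0, hq01, hq1⟩, hp, hpne, ha, hout⟩ := hθ
  obtain ⟨⟨hq0', hq01', hq1'⟩, hp', hpne', ha', hout'⟩ := hθ'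
  simp only [ZParamTuple.m₁] at h₁ hout hout'
  simp only [ZParamTuple.m₂] at h₂
  simp only [ZParamTuple.m₃] at h₃
  have hr : 0 < θ.q₁ - θ.q₀ := by linarith
  have hr' : 0 < θ'.q₁ - θ'.q₀ := by linarith
  have hrne : θ.q₁ - θ.q₀ ≠ 0 := ne_of_gt hr
  have hrne' : θ'.q₁ - θ'.q₀ ≠ 0 := ne_of_gt hr'
  have ht : θ.p true - θ.p false ≠ 0 := sub_ne_zero.mpr (Ne.symm hpne)
  set lam := (θ.q₁ - θ.q₀) / (θ'.q₁ - θ'.q₀) with hlam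
  set mu := (θ.q₀ - θ'.q₀) / (θ'.q₁ - θ'.q₀) with hmu
  have hlam_pos : 0 < lam := div_pos hr hr'
  have hlamne : lam ≠ 0 := ne_of_gt hlam_pos
  -- p' is affine in p
  have hP : ∀ z, θ'.p z = lam * θ.p z + mu := by
    intro z
    have hrw : lam * θ.p z + mu
        = ((θ.q₁ - θ.q₀) * θ.p z + (θ.q₀ - θ'.q₀)) / (θ'.q₁ - θ'.q₀) := by
      rw [hlam, hmu]; ring
    rw [hrw, eq_div_iff hrne']
    linear_combination -(h₂ z)
  -- r' * lam = r
  have hrlam : (θ'.q₁ - θ'.q₀) * lam = θ.q₁ - θ.q₀ := by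
    rw [hlam]; field_simp
  -- s' * lam = s for each v
  have hs' : ∀ v, (θ'.a₁ v - θ'.a₀ v) * lam = θ.a₁ v - θ.a₀ v := by
    intro v
    have hE1 : (θ.a₁ v - θ.a₀ v) * (θ.p true - θ.p false)
        = (θ'.a₁ v - θ'.a₀ v) * (θ'.p true - θ'.p false) := by
      linear_combination (h₁ true v) - (h₁ false v)
    rw [hP true, hP false] at hE1
    apply mul_left_cancel₀ ht
    linear_combination -hE1
  -- key quadratic identity from m₃ - m₁ * m₂
  have hsf : θ.a₁ false - θ.a₀ false ≠ 0 := sub_ne_zero.mpr (ha false).symm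
  have key : ∀ z, lam ^ 2 * (θ.p z * (1 - θ.p z))
      = (lam * θ.p z + mu) * (1 - (lam * θ.p z + mu)) := by
    intro z
    have hE3 : (θ.a₁ false - θ.a₀ false) * (θ.q₁ - θ.q₀) * (θ.p z * (1 - θ.p z))
        = (θ'.a₁ false - θ'.a₀ false) * (θ'.q₁ - θ'.q₀) * (θ'.p z * (1 - θ'.p z)) := by
      linear_combination (h₃ z false)
        - (θ.q₀ * (1 - θ.p z) + θ.q₁ * θ.p z) * (h₁ z false)
        - (θ'.a₀ false * (1 - θ'.p z) + θ'.a₁ false * θ'.p z) * (h₂ z)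
    rw [hP z] at hE3
    have h2 : (θ'.a₁ false - θ'.a₀ false) * (θ'.q₁ - θ'.q₀) * lam ^ 2
        = (θ.a₁ false - θ.a₀ false) * (θ.q₁ - θ.q₀) := by
      linear_combination ((θ'.q₁ - θ'.q₀) * lam) * (hs' false)
        + (θ.a₁ false - θ.a₀ false) * hrlam
    have hsr : (θ.a₁ false - θ.a₀ false) * (θ.q₁ - θ.q₀) ≠ 0 := mul_ne_zero hsf hrne
    apply mul_left_cancel₀ hsr
    linear_combination lam ^ 2 * hE3
      + ((lam * θ.p z + mu) * (1 - (lam * θ.p z + mu))) * h2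
  have h5 : lam * (1 - lam - 2 * mu) * (θ.p true - θ.p false) = 0 := by
    linear_combination (key false) - (key true)
  have h6 : 1 - lam - 2 * mu = 0 := by
    rcases mul_eq_zero.mp h5 with h | h
    · exact (mul_eq_zero.mp h).resolve_left hlamne
    · exact absurd h ht
  have h7 : mu * (1 - mu) = 0 := by
    linear_combination -(key false) - lam * θ.p false * h6
  rcases mul_eq_zero.mp h7 with hmu0 | hmu1
  · -- μ = 0, λ = 1: the tuples coincide
    have hlam1 : lam = 1 := by linarith
    have hq0eq : θ.q₀ = θ'.q₀ := by
      have := (div_eq_zero_iff.mp (hmu ▸ hmu0)).resolve_right hrne'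
      linarith
    have hq1eq : θ.q₁ = θ'.q₁ := by
      rw [hlam1, mul_one] at hrlam; linarith
    have hPeq : ∀ z, θ.p z = θ'.p z := by
      intro z; rw [hP z, hlam1, hmu0]; ring
    have hseq : ∀ v, (θ'.a₁ v - θ'.a₀ v) = θ.a₁ v - θ.a₀ v := by
      intro v; have := hs' v; rw [hlam1, mul_one] at this; exact this
    have ha0 : ∀ v, θ.a₀ v = θ'.a₀ v := by
      intro v
      have e := h₁ false v
      rw [← hPeq false] at e
      linear_combination e + θ.p false * (hseq v)
    have ha1 : ∀ v, θ.a₁ v = θ'.a₁ v := by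
      intro v; linear_combination (ha0 v) - (hseq v)
    have hcomb : ∀ z v, θ.α v + θ.β v * θ.p z = θ'.α v + θ'.β v * θ.p z := by
      intro z v
      have e := (hout z v).symm.trans ((h₁ z v).trans (hout' z v))
      rw [← hPeq z] at e
      exact e
    have hb : ∀ v, θ.β v = θ'.β v := by
      intro v
      have h8 : (θ.β v - θ'.β v) * (θ.p true - θ.p false) = 0 := by
        linear_combination (hcomb true v) - (hcomb false v)
      have := (mul_eq_zero.mp h8).resolve_right ht
      linarith
    have hal : ∀ v, θ.α v = θ'.α v := by
      intro v
      linear_combination (hcomb false v) - θ.p false * (hb v)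
    exact ZParamTuple.ext_of θ θ' ha0 ha1 hq0eq hq1eq hPeq hal hb
  · -- μ = 1 forces λ = -1, contradicting λ > 0
    exfalso
    have : mu = 1 := by linarith
    have : lam = -1 := by linarith
    linarith
end

section
/- Let K ≥ 2. If two heterogeneous-model tuples (A, Λ, L_Y) and (A', Λ', L_Y') have identical observable matrices, i.e., L_T(z) · Λ(z, v) · L_Y(v)ᵀ = L_T'(z) · Λ'(z, v) · L_Y'(v)ᵀ for all (z, v) ∈ {0,1}² (where L_T(z), L_T'(z) are built from A(z), A'(z) as described), then A(z) = A'(z) for each z, Λ(z, v) = Λ'(z, v) for each (z, v), and L_Y(v) = L_Y'(v) for each v. -/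
open Matrix

/-- The matrix `L_T` built from a `K × K` matrix `A`: its first row is all ones and,
for `i ≥ 1` (0-indexed), its `i`-th row is the `(i − 1)`-th row of `A`. -/
def LTmat {K : ℕ} (A : Matrix (Fin K) (Fin K) ℝ) : Matrix (Fin K) (Fin K) ℝ :=
  Matrix.of fun i j =>
    if (i : ℕ) = 0 then 1
    else A ⟨(i : ℕ) - 1, lt_of_le_of_lt (Nat.sub_le _ _) i.isLt⟩ j

section Aux
variable {K : ℕ}

lemma col_support (C : Matrix (Fin K) (Fin K) ℝ) (hC : IsUnit C.det)
    (d d' : Fin K → ℝ) (hd' : ∀ i j : Fin K, i ≠ j → d' i ≠ d' j)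
    (hcomm : ∀ i j, C i j * d j = d' i * C i j) :
    ∀ j : Fin K, ∃ i, C i j ≠ 0 ∧ ∀ k, k ≠ i → C k j = 0 := by
  intro j
  have hex : ∃ i, C i j ≠ 0 := by
    by_contra hall
    push_neg at hall
    exact hC.ne_zero (Matrix.det_eq_zero_of_column_eq_zero j hall)
  obtain ⟨i, hi⟩ := hex
  refine ⟨i, hi, fun k hk => ?_⟩
  by_contra hkne
  have h1 : d j = d' i := by
    have h2 : C i j * d j = C i j * d' i := by rw [hcomm i j, mul_comm]
    exact mul_left_cancel₀ hi h2
  have h2 : d j = d' k := by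
    have h3 : C k j * d j = C k j * d' k := by rw [hcomm k j, mul_comm]
    exact mul_left_cancel₀ hkne h3
  exact hd' k i hk (h2.symm.trans h1)

lemma LT_row0 (B : Matrix (Fin K) (Fin K) ℝ) (h0 : 0 < K) (j : Fin K) :
    LTmat B (⟨0, h0⟩ : Fin K) j = 1 := rfl

lemma LT_rowS (B : Matrix (Fin K) (Fin K) ℝ) (m : Fin K) (hm : (m : ℕ) + 1 < K) (j : Fin K) :
    LTmat B (⟨(m : ℕ) + 1, hm⟩ : Fin K) j = B m j := by
  simp only [LTmat, Matrix.of_apply]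
  rw [if_neg (by simp)]
  congr 1

lemma inv_diag_pos (d : Fin K → ℝ) (hd : ∀ i, d i ≠ 0) :
    (Matrix.diagonal d)⁻¹ = Matrix.diagonal (fun i => (d i)⁻¹) := by
  apply Matrix.inv_eq_right_inv
  rw [Matrix.diagonal_mul_diagonal]
  ext i j
  rcases eq_or_ne i j with rfl | hij
  · simp [mul_inv_cancel₀ (hd i)]
  · simp [Matrix.diagonal_apply_ne _ hij, Matrix.one_apply_ne hij]

lemma diag4 (a b c e : Fin K → ℝ) (hb : ∀ i, b i ≠ 0) (he : ∀ i, e i ≠ 0) :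
    Matrix.diagonal a * (Matrix.diagonal b)⁻¹ * Matrix.diagonal c * (Matrix.diagonal e)⁻¹
      = Matrix.diagonal (fun i => a i * (b i)⁻¹ * c i * (e i)⁻¹) := by
  rw [inv_diag_pos b hb, inv_diag_pos e he, Matrix.diagonal_mul_diagonal,
    Matrix.diagonal_mul_diagonal, Matrix.diagonal_mul_diagonal]

lemma conj_step (C0 C1 R0 R1 L00 L10 L11 L01 : Matrix (Fin K) (Fin K) ℝ)
    (hC0 : IsUnit C0.det) (hC1 : IsUnit C1.det)
    (hR0 : IsUnit R0.det) (hR1 : IsUnit R1.det) :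
    (C0 * (L00 * R0)) * (C1 * (L10 * R0))⁻¹ * (C1 * (L11 * R1)) * (C0 * (L01 * R1))⁻¹ * C0
      = C0 * (L00 * L10⁻¹ * L11 * L01⁻¹) := by
  simp only [Matrix.mul_inv_rev, Matrix.mul_assoc]
  rw [Matrix.mul_nonsing_inv_cancel_left _ _ hR0,
      Matrix.nonsing_inv_mul_cancel_left _ _ hC1,
      Matrix.nonsing_inv_mul _ hC0, Matrix.mul_one,
      Matrix.mul_nonsing_inv_cancel_left _ _ hR1]

lemma LT_identify (hK : 2 ≤ K) (A A' : Matrix (Fin K) (Fin K) ℝ)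
    (hsum : ∀ j, ∑ i, A i j = 1) (hsum' : ∀ j, ∑ i, A' i j = 1)
    (hdom : ∀ i j : Fin K, i ≠ j → A i j < A j j)
    (hdom' : ∀ i j : Fin K, i ≠ j → A' i j < A' j j)
    (C : Matrix (Fin K) (Fin K) ℝ) (hC : IsUnit C.det)
    (hdef : LTmat A = LTmat A' * C)
    (d d' : Fin K → ℝ) (hd' : ∀ i j : Fin K, i ≠ j → d' i ≠ d' j)
    (hcomm : ∀ i j, C i j * d j = d' i * C i j) :
    A = A' ∧ C = 1 := by
  have h0K : 0 < K := by omega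
  choose σ hσ1 hσ2 using col_support C hC d d' hd' hcomm
  have hcsum : ∀ j, ∑ k, C k j = 1 := by
    intro j
    have h0 := congrFun (congrFun hdef (⟨0, h0K⟩ : Fin K)) j
    rw [Matrix.mul_apply, LT_row0 A h0K j] at h0
    simp only [LT_row0 A' h0K, one_mul] at h0
    exact h0.symm
  have hCσ : ∀ j, C (σ j) j = 1 := by
    intro j
    have hs := hcsum j
    rwa [Fintype.sum_eq_single (σ j) (fun k hk => hσ2 j k hk)] at hs
  have hrel : ∀ (i j : Fin K), LTmat A i j = LTmat A' i (σ j) := by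
    intro i j
    have h0 := congrFun (congrFun hdef i) j
    rw [Matrix.mul_apply] at h0
    rw [h0, Fintype.sum_eq_single (σ j) (fun k hk => by rw [hσ2 j k hk, mul_zero]),
      hCσ j, mul_one]
  have hcol1 : ∀ (m : Fin K), (m : ℕ) + 1 < K → ∀ j, A m j = A' m (σ j) := by
    intro m hm j
    have h0 := hrel ⟨(m : ℕ) + 1, hm⟩ j
    rwa [LT_rowS A m hm j, LT_rowS A' m hm (σ j)] at h0
  have hcol : ∀ (m : Fin K) (j : Fin K), A m j = A' m (σ j) := by
    intro m j
    by_cases hm : (m : ℕ) + 1 < K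
    · exact hcol1 m hm j
    · have e1 : ∑ i, A i j = A m j + ∑ i ∈ Finset.univ.erase m, A i j :=
        (Finset.add_sum_erase _ _ (Finset.mem_univ m)).symm
      have e2 : ∑ i, A' i (σ j) = A' m (σ j) + ∑ i ∈ Finset.univ.erase m, A' i (σ j) :=
        (Finset.add_sum_erase _ _ (Finset.mem_univ m)).symm
      have e3 : ∑ i ∈ Finset.univ.erase m, A i j = ∑ i ∈ Finset.univ.erase m, A' i (σ j) := by
        refine Finset.sum_congr rfl (fun i hi => ?_)
        have hne : (i : ℕ) ≠ (m : ℕ) := fun hc => (Finset.ne_of_mem_erase hi) (Fin.ext hc)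
        have := i.isLt
        have := m.isLt
        exact hcol1 i (by omega) j
      rw [hsum j] at e1
      rw [hsum' (σ j)] at e2
      linarith
  have hσid : ∀ j, σ j = j := by
    intro j
    by_contra hne
    have h1 : A' j (σ j) < A' (σ j) (σ j) := hdom' j (σ j) (fun hc => hne hc.symm)
    have h2 : A (σ j) j < A j j := hdom (σ j) j hne
    have h3 : A j j = A' j (σ j) := hcol j j
    have h4 : A (σ j) j = A' (σ j) (σ j) := hcol (σ j) j
    linarith
  constructor
  · ext m j
    rw [hcol m j, hσid j]
  · ext i j
    rw [Matrix.one_apply]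
    by_cases hij : i = j
    · rw [if_pos hij, hij]
      have hc := hCσ j
      rwa [hσid j] at hc
    · rw [if_neg hij]
      exact hσ2 j i (by rw [hσid j]; exact hij)

end Aux

/-- A heterogeneous-model tuple `(A, Λ, L_Y)` (algebraic core of Proposition 3):
`A(z)` collects the probabilities `P(S = sᵢ | S* = sⱼ, Z = z)` (nonnegative entries,
columns summing to one, strictly dominant diagonal, with `L_T(z)` invertible),
`Λ(z, v)` is diagonal with strictly positive diagonal collecting
`P(S* = sⱼ | Z = z, V = v)`, `L_Y(v)` is invertible with all-ones first row, and the
diagonal entries of `Λ̃ = Λ(0,0) Λ(1,0)⁻¹ Λ(1,1) Λ(0,1)⁻¹` are pairwise distinct.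
Binary indices are encoded with `0 = false`, `1 = true`. -/
structure HetModelTuple {K : ℕ} (hK : 2 ≤ K)
    (A : Bool → Matrix (Fin K) (Fin K) ℝ)
    (Λ : Bool → Bool → Matrix (Fin K) (Fin K) ℝ)
    (LY : Bool → Matrix (Fin K) (Fin K) ℝ) : Prop where
  nonneg : ∀ z i j, 0 ≤ A z i j
  colSum : ∀ z j, ∑ i, A z i j = 1
  diagDominant : ∀ z, ∀ i j : Fin K, i ≠ j → A z i j < A z j j
  lt_inv : ∀ z, IsUnit (LTmat (A z)).det
  lam_diag : ∀ z v, (Λ z v).IsDiag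
  lam_pos : ∀ z v i, 0 < Λ z v i i
  ly_inv : ∀ v, IsUnit (LY v).det
  ly_row : ∀ v j, LY v ⟨0, by omega⟩ j = 1
  tilde_distinct : ∀ i j : Fin K, i ≠ j →
    (Λ false false * (Λ true false)⁻¹ * Λ true true * (Λ false true)⁻¹) i i
      ≠ (Λ false false * (Λ true false)⁻¹ * Λ true true * (Λ false true)⁻¹) j j

/-- **Algebraic core of Proposition 3**: two heterogeneous-model tuples with
identical observable matrices `Q(z, v) = L_T(z) · Λ(z, v) · L_Y(v)ᵀ` for all
`(z, v) ∈ {0,1}²` coincide. -/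
theorem hetModelTuple_identification {K : ℕ} (hK : 2 ≤ K)
    (A A' : Bool → Matrix (Fin K) (Fin K) ℝ)
    (Λ Λ' : Bool → Bool → Matrix (Fin K) (Fin K) ℝ)
    (LY LY' : Bool → Matrix (Fin K) (Fin K) ℝ)
    (h : HetModelTuple hK A Λ LY) (h' : HetModelTuple hK A' Λ' LY')
    (hobs : ∀ z v : Bool,
      LTmat (A z) * Λ z v * (LY v)ᵀ = LTmat (A' z) * Λ' z v * (LY' v)ᵀ) :
    (∀ z : Bool, A z = A' z) ∧ (∀ z v : Bool, Λ z v = Λ' z v) ∧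
    (∀ v : Bool, LY v = LY' v) := by
  have h0K : 0 < K := by omega
  -- diagonal representations
  obtain ⟨dm, hdm⟩ : ∃ dm : Bool → Bool → Fin K → ℝ,
      ∀ z v, Λ z v = Matrix.diagonal (dm z v) :=
    ⟨fun z v => (Λ z v).diag, fun z v => ((h.lam_diag z v).diagonal_diag).symm⟩
  obtain ⟨dm', hdm'⟩ : ∃ dm : Bool → Bool → Fin K → ℝ,
      ∀ z v, Λ' z v = Matrix.diagonal (dm z v) :=
    ⟨fun z v => (Λ' z v).diag, fun z v => ((h'.lam_diag z v).diagonal_diag).symm⟩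
  have hdmpos : ∀ z v i, 0 < dm z v i := by
    intro z v i
    have h0 := h.lam_pos z v i
    rw [hdm z v] at h0
    simpa using h0
  have hdmpos' : ∀ z v i, 0 < dm' z v i := by
    intro z v i
    have h0 := h'.lam_pos z v i
    rw [hdm' z v] at h0
    simpa using h0
  -- units
  have hΛ'u : ∀ z v, IsUnit (Λ' z v).det := by
    intro z v
    rw [hdm' z v, Matrix.det_diagonal]
    exact isUnit_iff_ne_zero.2 (Finset.prod_ne_zero_iff.2 fun i _ => (hdmpos' z v i).ne')
  have hYu : ∀ v, IsUnit ((LY v)ᵀ).det := fun v => by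
    rw [Matrix.det_transpose]; exact h.ly_inv v
  have hY'u : ∀ v, IsUnit ((LY' v)ᵀ).det := fun v => by
    rw [Matrix.det_transpose]; exact h'.ly_inv v
  have hCu : ∀ z, IsUnit ((LTmat (A' z))⁻¹ * LTmat (A z)).det := by
    intro z
    rw [Matrix.det_mul]
    exact (Matrix.isUnit_nonsing_inv_det _ (h'.lt_inv z)).mul (h.lt_inv z)
  have hRu : ∀ v, IsUnit ((LY v)ᵀ * ((LY' v)ᵀ)⁻¹).det := by
    intro v
    rw [Matrix.det_mul]
    exact (hYu v).mul (Matrix.isUnit_nonsing_inv_det _ (hY'u v))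
  -- key identity
  have key : ∀ z v,
      ((LTmat (A' z))⁻¹ * LTmat (A z)) * (Λ z v * ((LY v)ᵀ * ((LY' v)ᵀ)⁻¹)) = Λ' z v := by
    intro z v
    have h1 : LTmat (A z) * (Λ z v * (LY v)ᵀ) = LTmat (A' z) * (Λ' z v * (LY' v)ᵀ) := by
      have h2 := hobs z v
      rwa [Matrix.mul_assoc, Matrix.mul_assoc] at h2
    calc ((LTmat (A' z))⁻¹ * LTmat (A z)) * (Λ z v * ((LY v)ᵀ * ((LY' v)ᵀ)⁻¹))
        = (LTmat (A' z))⁻¹ * (LTmat (A z) * (Λ z v * (LY v)ᵀ)) * ((LY' v)ᵀ)⁻¹ := by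
          simp only [Matrix.mul_assoc]
      _ = (LTmat (A' z))⁻¹ * (LTmat (A' z) * (Λ' z v * (LY' v)ᵀ)) * ((LY' v)ᵀ)⁻¹ := by
          rw [h1]
      _ = Λ' z v := by
          rw [Matrix.nonsing_inv_mul_cancel_left _ _ (h'.lt_inv z),
            Matrix.mul_nonsing_inv_cancel_right _ _ (hY'u v)]
  -- tilde diagonals
  obtain ⟨dt, dt1, hDt, hDt1, hinvrel⟩ : ∃ dt dt1 : Fin K → ℝ,
      Λ false false * (Λ true false)⁻¹ * Λ true true * (Λ false true)⁻¹
        = Matrix.diagonal dt ∧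
      Λ true false * (Λ false false)⁻¹ * Λ false true * (Λ true true)⁻¹
        = Matrix.diagonal dt1 ∧
      ∀ i, dt1 i * dt i = 1 := by
    refine ⟨fun i => dm false false i * (dm true false i)⁻¹ * dm true true i *
        (dm false true i)⁻¹,
      fun i => dm true false i * (dm false false i)⁻¹ * dm false true i *
        (dm true true i)⁻¹, ?_, ?_, ?_⟩
    · rw [hdm false false, hdm true false, hdm true true, hdm false true]
      exact diag4 _ _ _ _ (fun i => (hdmpos true false i).ne') (fun i => (hdmpos false true i).ne')
    · rw [hdm true false, hdm false false, hdm false true, hdm true true]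
      exact diag4 _ _ _ _ (fun i => (hdmpos false false i).ne') (fun i => (hdmpos true true i).ne')
    · intro i
      have ha := (hdmpos false false i).ne'
      have hb := (hdmpos true false i).ne'
      have hc := (hdmpos true true i).ne'
      have he := (hdmpos false true i).ne'
      field_simp
  obtain ⟨dt', dt1', hDt', hDt1', hinvrel'⟩ : ∃ dt dt1 : Fin K → ℝ,
      Λ' false false * (Λ' true false)⁻¹ * Λ' true true * (Λ' false true)⁻¹
        = Matrix.diagonal dt ∧
      Λ' true false * (Λ' false false)⁻¹ * Λ' false true * (Λ' true true)⁻¹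
        = Matrix.diagonal dt1 ∧
      ∀ i, dt1 i * dt i = 1 := by
    refine ⟨fun i => dm' false false i * (dm' true false i)⁻¹ * dm' true true i *
        (dm' false true i)⁻¹,
      fun i => dm' true false i * (dm' false false i)⁻¹ * dm' false true i *
        (dm' true true i)⁻¹, ?_, ?_, ?_⟩
    · rw [hdm' false false, hdm' true false, hdm' true true, hdm' false true]
      exact diag4 _ _ _ _ (fun i => (hdmpos' true false i).ne') (fun i => (hdmpos' false true i).ne')
    · rw [hdm' true false, hdm' false false, hdm' false true, hdm' true true]
      exact diag4 _ _ _ _ (fun i => (hdmpos' false false i).ne') (fun i => (hdmpos' true true i).ne')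
    · intro i
      have ha := (hdmpos' false false i).ne'
      have hb := (hdmpos' true false i).ne'
      have hc := (hdmpos' true true i).ne'
      have he := (hdmpos' false true i).ne'
      field_simp
  -- distinctness
  have hdtdist' : ∀ i j : Fin K, i ≠ j → dt' i ≠ dt' j := by
    intro i j hij
    have h0 := h'.tilde_distinct i j hij
    rw [hDt'] at h0
    simpa using h0
  have hdt1dist' : ∀ i j : Fin K, i ≠ j → dt1' i ≠ dt1' j := by
    intro i j hij hc
    apply hdtdist' i j hij
    have hi : dt' i = (dt1' i)⁻¹ := eq_inv_of_mul_eq_one_right (mul_comm (dt1' i) (dt' i) ▸ hinvrel' i)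
    have hj : dt' j = (dt1' j)⁻¹ := eq_inv_of_mul_eq_one_right (mul_comm (dt1' j) (dt' j) ▸ hinvrel' j)
    rw [hi, hj, hc]
  -- z = false
  have hconjF := conj_step ((LTmat (A' false))⁻¹ * LTmat (A false))
    ((LTmat (A' true))⁻¹ * LTmat (A true))
    ((LY false)ᵀ * ((LY' false)ᵀ)⁻¹) ((LY true)ᵀ * ((LY' true)ᵀ)⁻¹)
    (Λ false false) (Λ true false) (Λ true true) (Λ false true)
    (hCu false) (hCu true) (hRu false) (hRu true)
  rw [key false false, key true false, key true true, key false true, hDt', hDt] at hconjF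
  have hcommF : ∀ i j, ((LTmat (A' false))⁻¹ * LTmat (A false)) i j * dt j
      = dt' i * ((LTmat (A' false))⁻¹ * LTmat (A false)) i j := by
    intro i j
    have h0 : (Matrix.diagonal dt' * ((LTmat (A' false))⁻¹ * LTmat (A false))) i j
        = (((LTmat (A' false))⁻¹ * LTmat (A false)) * Matrix.diagonal dt) i j := by
      rw [hconjF]
    rw [Matrix.diagonal_mul, Matrix.mul_diagonal] at h0
    exact h0.symm
  have hdefF : LTmat (A false) = LTmat (A' false) * ((LTmat (A' false))⁻¹ * LTmat (A false)) :=
    (Matrix.mul_nonsing_inv_cancel_left _ _ (h'.lt_inv false)).symm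
  obtain ⟨hAF, hCF⟩ := LT_identify hK (A false) (A' false) (h.colSum false) (h'.colSum false)
    (h.diagDominant false) (h'.diagDominant false) _ (hCu false) hdefF dt dt' hdtdist' hcommF
  -- z = true
  have hconjT := conj_step ((LTmat (A' true))⁻¹ * LTmat (A true))
    ((LTmat (A' false))⁻¹ * LTmat (A false))
    ((LY false)ᵀ * ((LY' false)ᵀ)⁻¹) ((LY true)ᵀ * ((LY' true)ᵀ)⁻¹)
    (Λ true false) (Λ false false) (Λ false true) (Λ true true)
    (hCu true) (hCu false) (hRu false) (hRu true)
  rw [key true false, key false false, key false true, key true true, hDt1', hDt1] at hconjT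
  have hcommT : ∀ i j, ((LTmat (A' true))⁻¹ * LTmat (A true)) i j * dt1 j
      = dt1' i * ((LTmat (A' true))⁻¹ * LTmat (A true)) i j := by
    intro i j
    have h0 : (Matrix.diagonal dt1' * ((LTmat (A' true))⁻¹ * LTmat (A true))) i j
        = (((LTmat (A' true))⁻¹ * LTmat (A true)) * Matrix.diagonal dt1) i j := by
      rw [hconjT]
    rw [Matrix.diagonal_mul, Matrix.mul_diagonal] at h0
    exact h0.symm
  have hdefT : LTmat (A true) = LTmat (A' true) * ((LTmat (A' true))⁻¹ * LTmat (A true)) :=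
    (Matrix.mul_nonsing_inv_cancel_left _ _ (h'.lt_inv true)).symm
  obtain ⟨hAT, hCT⟩ := LT_identify hK (A true) (A' true) (h.colSum true) (h'.colSum true)
    (h.diagDominant true) (h'.diagDominant true) _ (hCu true) hdefT dt1 dt1' hdt1dist' hcommT
  -- assemble
  have hA : ∀ z, A z = A' z := fun z => by cases z <;> assumption
  have hmid : ∀ z v, Λ z v * ((LY v)ᵀ * ((LY' v)ᵀ)⁻¹) = Λ' z v := by
    intro z v
    have h0 := key z v
    rwa [hA z, Matrix.nonsing_inv_mul _ (h'.lt_inv z), Matrix.one_mul] at h0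
  have he : ∀ z v, Λ z v * (LY v)ᵀ = Λ' z v * (LY' v)ᵀ := by
    intro z v
    calc Λ z v * (LY v)ᵀ
        = Λ z v * ((LY v)ᵀ * (((LY' v)ᵀ)⁻¹ * (LY' v)ᵀ)) := by
          rw [Matrix.nonsing_inv_mul _ (hY'u v), Matrix.mul_one]
      _ = (Λ z v * ((LY v)ᵀ * ((LY' v)ᵀ)⁻¹)) * (LY' v)ᵀ := by
          simp only [Matrix.mul_assoc]
      _ = Λ' z v * (LY' v)ᵀ := by rw [hmid z v]
  have hlam : ∀ z v, Λ z v = Λ' z v := by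
    intro z v
    have hdiagEq : ∀ i, dm z v i = dm' z v i := by
      intro i
      have h0 : (Λ z v * (LY v)ᵀ) i (⟨0, h0K⟩ : Fin K)
          = (Λ' z v * (LY' v)ᵀ) i (⟨0, h0K⟩ : Fin K) := by rw [he z v]
      rw [hdm z v, hdm' z v, Matrix.diagonal_mul, Matrix.diagonal_mul,
        Matrix.transpose_apply, Matrix.transpose_apply, h.ly_row v i, h'.ly_row v i,
        mul_one, mul_one] at h0
      exact h0
    rw [hdm z v, hdm' z v]
    exact congrArg Matrix.diagonal (funext hdiagEq)
  have hly : ∀ v, LY v = LY' v := by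
    intro v
    have h0 := he false v
    rw [hlam false v] at h0
    have hcan : (LY v)ᵀ = (LY' v)ᵀ := by
      calc (LY v)ᵀ = (Λ' false v)⁻¹ * (Λ' false v * (LY v)ᵀ) :=
          (Matrix.nonsing_inv_mul_cancel_left _ _ (hΛ'u false v)).symm
        _ = (Λ' false v)⁻¹ * (Λ' false v * (LY' v)ᵀ) := by rw [h0]
        _ = (LY' v)ᵀ := Matrix.nonsing_inv_mul_cancel_left _ _ (hΛ'u false v)
    have h1 := congrArg Matrix.transpose hcan
    simpa using h1
  exact ⟨hA, hlam, hly⟩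
end

section
/- Let (Ω, F, P) be a probability space, Y : Ω → ℝ a measurable function, S, S* : Ω → 𝒮 random variables taking values in a finite set 𝒮, and Z, V : Ω → {0,1} random variables, such that every event {S* = s*, Z = z, V = v} has positive probability. Assume, for every Borel set Δ ⊆ ℝ, every s, s* ∈ 𝒮, and every (z, v) ∈ {0,1}²: (i) P(Y ∈ Δ, S = s | S* = s*, Z = z, V = v) = P(Y ∈ Δ | S* = s*, Z = z, V = v) · P(S = s | S* = s*, Z = z, V = v); (ii) P(Y ∈ Δ | S* = s*, Z = z, V = v) = P(Y ∈ Δ | S* = s*, V = v); (iii) P(S = s | S* = s*, Z = z, V = v) = P(S = s | S* = s*, Z = z). Then for every Borel Δ, s ∈ 𝒮, and (z, v) ∈ {0,1}²: P(Y ∈ Δ, S = s | Z = z, V = v) = Σ_{s* ∈ 𝒮} P(S* = s* | Z = z, V = v) · P(Y ∈ Δ | S* = s*, V = v) · P(S = s | S* = s*, Z = z); moreover P(Y ∈ Δ | Z = z, V = v) = Σ_{s* ∈ 𝒮} P(S* = s* | Z = z, V = v) · P(Y ∈ Δ | S* = s*, V = v) and P(S = s | Z = z, V = v) = Σ_{s*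 ∈ 𝒮} P(S* = s* | Z = z, V = v) · P(S = s | S* = s*, Z = z). -/
open MeasureTheory

/-- **The finite mixture representation** (equation "(model2b)" of the paper),
derived in the proof of Proposition 3: under the conditional independence
assumptions (i) `Y ⊥ S | (S*, Z, V)`, (ii) `Y ⊥ Z | (S*, V)`, and
(iii) `S ⊥ V | (S*, Z)`, the observable conditional probabilities are finite
mixtures over the latent `S*` (binary indices: `0 = false`, `1 = true`). -/
theorem finite_mixture_representation
    {Ω : Type*} [MeasurableSpace Ω] (P : Measure Ω) [IsProbabilityMeasure P]
    {𝒮 : Type*} [Fintype 𝒮] [MeasurableSpace 𝒮] [MeasurableSingletonClass 𝒮]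
    (Y : Ω → ℝ) (hY : Measurable Y)
    (S Sstar : Ω → 𝒮) (Z V : Ω → Bool)
    (hS : Measurable S) (hSstar : Measurable Sstar)
    (hZ : Measurable Z) (hV : Measurable V)
    (hpos : ∀ (s' : 𝒮) (z v : Bool),
      0 < P {ω | Sstar ω = s' ∧ Z ω = z ∧ V ω = v})
    -- (i): conditional independence of Y and S given (S*, Z, V)
    (h1 : ∀ (Δ : Set ℝ), MeasurableSet Δ → ∀ (s s' : 𝒮) (z v : Bool),
      cPr P {ω | Y ω ∈ Δ ∧ S ω = s} {ω | Sstar ω = s' ∧ Z ω = z ∧ V ω = v}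
        = cPr P {ω | Y ω ∈ Δ} {ω | Sstar ω = s' ∧ Z ω = z ∧ V ω = v}
          * cPr P {ω | S ω = s} {ω | Sstar ω = s' ∧ Z ω = z ∧ V ω = v})
    -- (ii): P(Y ∈ Δ | S*, Z, V) = P(Y ∈ Δ | S*, V)
    (h2 : ∀ (Δ : Set ℝ), MeasurableSet Δ → ∀ (s' : 𝒮) (z v : Bool),
      cPr P {ω | Y ω ∈ Δ} {ω | Sstar ω = s' ∧ Z ω = z ∧ V ω = v}
        = cPr P {ω | Y ω ∈ Δ} {ω | Sstar ω = s' ∧ V ω = v})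
    -- (iii): P(S = s | S*, Z, V) = P(S = s | S*, Z)
    (h3 : ∀ (s s' : 𝒮) (z v : Bool),
      cPr P {ω | S ω = s} {ω | Sstar ω = s' ∧ Z ω = z ∧ V ω = v}
        = cPr P {ω | S ω = s} {ω | Sstar ω = s' ∧ Z ω = z}) :
    ∀ (Δ : Set ℝ), MeasurableSet Δ → ∀ (s : 𝒮) (z v : Bool),
      (cPr P {ω | Y ω ∈ Δ ∧ S ω = s} {ω | Z ω = z ∧ V ω = v}
        = ∑ s' : 𝒮, cPr P {ω | Sstar ω = s'} {ω | Z ω = z ∧ V ω = v}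
            * cPr P {ω | Y ω ∈ Δ} {ω | Sstar ω = s' ∧ V ω = v}
            * cPr P {ω | S ω = s} {ω | Sstar ω = s' ∧ Z ω = z}) ∧
      (cPr P {ω | Y ω ∈ Δ} {ω | Z ω = z ∧ V ω = v}
        = ∑ s' : 𝒮, cPr P {ω | Sstar ω = s'} {ω | Z ω = z ∧ V ω = v}
            * cPr P {ω | Y ω ∈ Δ} {ω | Sstar ω = s' ∧ V ω = v}) ∧
      (cPr P {ω | S ω = s} {ω | Z ω = z ∧ V ω = v}
        = ∑ s' : 𝒮, cPr P {ω | Sstar ω = s'} {ω | Z ω = z ∧ V ω = v}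
            * cPr P {ω | S ω = s} {ω | Sstar ω = s' ∧ Z ω = z}) := by
  classical
  intro Δ hΔ s z v
  have hΩ : Nonempty Ω := by
    rcases isEmpty_or_nonempty Ω with h | h
    · exfalso
      have h1 : (P Set.univ) = 1 := measure_univ
      rw [Set.univ_eq_empty_iff.mpr h] at h1
      simp at h1
    · exact h
  have s0 : 𝒮 := Sstar hΩ.some
  have mA' : ∀ s' : 𝒮, MeasurableSet {ω | Sstar ω = s' ∧ Z ω = z ∧ V ω = v} := by
    intro s'
    exact (hSstar (measurableSet_singleton s')).inter
      ((hZ (measurableSet_singleton z)).inter (hV (measurableSet_singleton v)))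
  have hA'ne : ∀ s' : 𝒮, (P {ω | Sstar ω = s' ∧ Z ω = z ∧ V ω = v}).toReal ≠ 0 := by
    intro s'
    exact ne_of_gt (ENNReal.toReal_pos (ne_of_gt (hpos s' z v)) (measure_ne_top P _))
  have hApos : (0:ℝ) < (P {ω | Z ω = z ∧ V ω = v}).toReal := by
    refine ENNReal.toReal_pos (ne_of_gt ?_) (measure_ne_top P _)
    refine lt_of_lt_of_le (hpos s0 z v) (measure_mono ?_)
    rintro ω ⟨_, hz, hv⟩
    exact ⟨hz, hv⟩
  have hAne : (P {ω | Z ω = z ∧ V ω = v}).toReal ≠ 0 := ne_of_gt hApos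
  have mix : ∀ (B : Set Ω), MeasurableSet B →
      cPr P B {ω | Z ω = z ∧ V ω = v}
        = ∑ s' : 𝒮, cPr P {ω | Sstar ω = s'} {ω | Z ω = z ∧ V ω = v}
            * cPr P B {ω | Sstar ω = s' ∧ Z ω = z ∧ V ω = v} := by
    intro B hB
    have hunion : {ω | Z ω = z ∧ V ω = v} ∩ B
        = ⋃ s' : 𝒮, ({ω | Sstar ω = s' ∧ Z ω = z ∧ V ω = v} ∩ B) := by
      ext ω
      simp only [Set.mem_inter_iff, Set.mem_iUnion, Set.mem_setOf_eq]
      constructor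
      · rintro ⟨hA, hBω⟩
        exact ⟨Sstar ω, ⟨rfl, hA⟩, hBω⟩
      · rintro ⟨s', ⟨_, hA⟩, hBω⟩
        exact ⟨hA, hBω⟩
    have hdisj : Pairwise (Function.onFun Disjoint
        fun s' : 𝒮 => {ω | Sstar ω = s' ∧ Z ω = z ∧ V ω = v} ∩ B) := by
      intro a b hab
      simp only [Function.onFun]
      rw [Set.disjoint_left]
      rintro ω ⟨⟨ha, _⟩, _⟩ ⟨⟨hb, _⟩, _⟩
      exact hab (ha ▸ hb ▸ rfl)
    have hsum : P ({ω | Z ω = z ∧ V ω = v} ∩ B)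
        = ∑ s' : 𝒮, P ({ω | Sstar ω = s' ∧ Z ω = z ∧ V ω = v} ∩ B) := by
      rw [hunion, measure_iUnion hdisj (fun s' => (mA' s').inter hB), tsum_fintype]
    have toRsum : (P ({ω | Z ω = z ∧ V ω = v} ∩ B)).toReal
        = ∑ s' : 𝒮, (P ({ω | Sstar ω = s' ∧ Z ω = z ∧ V ω = v} ∩ B)).toReal := by
      rw [hsum]
      exact ENNReal.toReal_sum (fun _ _ => measure_ne_top P _)
    unfold cPr
    rw [toRsum, Finset.sum_div]
    refine Finset.sum_congr rfl fun s' _ => ?_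
    have hAe : {ω | Z ω = z ∧ V ω = v} ∩ {ω | Sstar ω = s'}
        = {ω | Sstar ω = s' ∧ Z ω = z ∧ V ω = v} := by
      ext ω
      simp only [Set.mem_inter_iff, Set.mem_setOf_eq]
      tauto
    rw [hAe, div_mul_div_comm, mul_comm ((P {ω | Z ω = z ∧ V ω = v}).toReal),
      mul_div_mul_left _ _ (hA'ne s')]
  have mB1 : MeasurableSet {ω | Y ω ∈ Δ ∧ S ω = s} :=
    (hY hΔ).inter (hS (measurableSet_singleton s))
  have mB2 : MeasurableSet {ω | Y ω ∈ Δ} := hY hΔ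
  have mB3 : MeasurableSet {ω | S ω = s} := hS (measurableSet_singleton s)
  refine ⟨?_, ?_, ?_⟩
  · rw [mix _ mB1]
    refine Finset.sum_congr rfl fun s' _ => ?_
    rw [h1 Δ hΔ s s' z v, h2 Δ hΔ s' z v, h3 s s' z v, mul_assoc]
  · rw [mix _ mB2]
    refine Finset.sum_congr rfl fun s' _ => ?_
    rw [h2 Δ hΔ s' z v]
  · rw [mix _ mB3]
    refine Finset.sum_congr rfl fun s' _ => ?_
    rw [h3 s s' z v]
end
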